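/- arXiv:1812.07112 — 3 statements merged into one kernel-verified Lean document; each statement's English description precedes it below -/
import Mathlib

section
/- For all n ≥ 1 and k ≥ 0, the number of permutations of length n avoiding both 123 and 132 with exactly k peaks equals C(n, 2k+1). -/
open scoped Classical

/-- The word `π₁π₂⋯π_n` of a permutation of `{1,…,n}`, with values in `{1,…,n}`. -/
def permWord {n : ℕ} (π : Equiv.Perm (Fin n)) : List ℕ :=
  List.ofFn fun i => (π i : ℕ) + 1

/-- The word `l` contains the word `ρ` as a (classical) pattern. -/
def ContainsPat (l ρ : List ℕ) : Prop :=
  ∃ f : Fin ρ.length → Fin l.length, StrictMono f ∧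
    ∀ a b : Fin ρ.length, ρ.get a < ρ.get b ↔ l.get (f a) < l.get (f b)

/-- `l` avoids every pattern in the list `B`. -/
def AvoidsAll (l : List ℕ) (B : List (List ℕ)) : Prop :=
  ∀ ρ ∈ B, ¬ ContainsPat l ρ

/-- Number of ascents of the word `l`. -/
def ascents (l : List ℕ) : ℕ :=
  ((Finset.range (l.length - 1)).filter fun i => l.getD i 0 < l.getD (i + 1) 0).card

/-- Number of descents of the word `l`. -/
def descents (l : List ℕ) : ℕ :=
  ((Finset.range (l.length - 1)).filter fun i => l.getD (i + 1) 0 < l.getD i 0).card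

/-- Number of double ascents of the word `l`. -/
def dascents (l : List ℕ) : ℕ :=
  ((Finset.range (l.length - 2)).filter fun i =>
    l.getD i 0 < l.getD (i + 1) 0 ∧ l.getD (i + 1) 0 < l.getD (i + 2) 0).card

/-- Number of double descents of the word `l`. -/
def ddescents (l : List ℕ) : ℕ :=
  ((Finset.range (l.length - 2)).filter fun i =>
    l.getD (i + 1) 0 < l.getD i 0 ∧ l.getD (i + 2) 0 < l.getD (i + 1) 0).card

/-- Number of peaks of the word `l`. -/
def peaks (l : List ℕ) : ℕ :=
  ((Finset.range (l.length - 2)).filter fun i =>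
    l.getD i 0 < l.getD (i + 1) 0 ∧ l.getD (i + 2) 0 < l.getD (i + 1) 0).card

/-- Number of valleys of the word `l`. -/
def valleys (l : List ℕ) : ℕ :=
  ((Finset.range (l.length - 2)).filter fun i =>
    l.getD (i + 1) 0 < l.getD i 0 ∧ l.getD (i + 1) 0 < l.getD (i + 2) 0).card

/-- `acount n k stat B` is the number of permutations of `{1,…,n}` avoiding all
patterns in `B` whose statistic `stat` equals `k`. -/
noncomputable def acount (n k : ℕ) (stat : List ℕ → ℕ) (B : List (List ℕ)) : ℕ :=
  (Finset.univ.filter fun π : Equiv.Perm (Fin n) =>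
    AvoidsAll (permWord π) B ∧ stat (permWord π) = k).card


def strs : ℕ → Finset (List Bool)
  | 0 => {[]}
  | m+1 => ((strs m).image (List.cons true)) ∪ ((strs m).image (List.cons false))

lemma mem_strs {m : ℕ} {l : List Bool} : l ∈ strs m ↔ l.length = m := by
  induction m generalizing l with
  | zero => simp [strs, List.length_eq_zero_iff]
  | succ m ih =>
    simp only [strs, Finset.mem_union, Finset.mem_image]
    constructor
    · rintro (⟨t, ht, rfl⟩ | ⟨t, ht, rfl⟩) <;> simp [ih.mp ht]
    · intro hl
      match l with
      | b :: t =>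
        cases b
        · exact Or.inr ⟨t, ih.mpr (by simpa using hl), rfl⟩
        · exact Or.inl ⟨t, ih.mpr (by simpa using hl), rfl⟩

def tensL : List Bool → ℕ
  | a :: b :: t => (if a = true ∧ b = false then 1 else 0) + tensL (b :: t)
  | _ => 0

lemma cons_true_false_disj (s t : Finset (List Bool)) :
    Disjoint (s.image (List.cons true)) (t.image (List.cons false)) := by
  simp only [Finset.disjoint_left, Finset.mem_image]
  rintro l ⟨a, _, rfl⟩ ⟨b, _, h⟩
  simp at h


lemma tensL_cons_ne (a : Bool) {t : List Bool} (ht : t ≠ []) :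
    tensL (a :: t) = (if a = true ∧ t.headI = false then 1 else 0) + tensL t := by
  cases t with
  | nil => exact absurd rfl ht
  | cons b s => rfl

lemma split_head {p : List Bool → Prop} [DecidablePred p] (S : Finset (List Bool)) :
    (S.filter p).card = (S.filter fun l => p l ∧ l.headI = true).card
      + (S.filter fun l => p l ∧ l.headI = false).card := by
  classical
  rw [← Finset.card_union_of_disjoint]
  · congr 1
    ext l
    simp only [Finset.mem_filter, Finset.mem_union]
    cases h : l.headI <;> tauto
  · simp only [Finset.disjoint_left, Finset.mem_filter]
    rintro l ⟨-, -, h1⟩ ⟨-, -, h2⟩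
    rw [h1] at h2; simp at h2

lemma count_strs (m : ℕ) (hm : 1 ≤ m) (k : ℕ) :
    (((strs m).filter fun l => tensL l = k ∧ l.headI = true).card = Nat.choose m (2*k)) ∧
    (((strs m).filter fun l => tensL l = k ∧ l.headI = false).card = Nat.choose m (2*k+1)) := by
  induction m, hm using Nat.le_induction generalizing k with
  | base =>
    have h1 : strs 1 = {[true], [false]} := by decide
    rw [h1]
    rcases k with _ | k
    · constructor <;> · rw [show (2*0) = 0 by ring]; decide
    · have he : ∀ b : Bool, ({[true], [false]} : Finset (List Bool)).filter
          (fun l => tensL l = k + 1 ∧ l.headI = b) = ∅ := by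
        intro b
        rw [Finset.filter_eq_empty_iff]; intro l hl
        fin_cases hl <;> simp [tensL]
      constructor
      · rw [he true, Finset.card_empty, eq_comm, Nat.choose_eq_zero_iff]; omega
      · rw [he false, Finset.card_empty, eq_comm, Nat.choose_eq_zero_iff]; omega
  | succ m hm ih =>
    classical
    have hlen : ∀ t ∈ strs m, t ≠ ([] : List Bool) := by
      intro t ht h
      have := mem_strs.mp ht
      rw [h] at this
      simp at this
      omega
    -- head = true part
    have hA : (((strs (m+1)).filter fun l => tensL l = k ∧ l.headI = true).card
        = ((strs m).filter fun t => tensL (true :: t) = k).card) := by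
      rw [show strs (m+1) = ((strs m).image (List.cons true)) ∪ ((strs m).image (List.cons false)) from rfl,
        Finset.filter_union, Finset.card_union_of_disjoint
          (Finset.disjoint_filter_filter (cons_true_false_disj _ _)),
        Finset.filter_image, Finset.filter_image]
      have h2 : ((strs m).filter fun t => tensL (false :: t) = k ∧ (false :: t).headI = true) = ∅ := by
        rw [Finset.filter_eq_empty_iff]; intro t _; simp
      rw [h2]
      simp only [Finset.image_empty, Finset.card_empty, add_zero]
      rw [Finset.card_image_of_injective _ (fun a b h => by injection h)]
      congr 1
      apply Finset.filter_congr
      intro t _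
      simp
    have hB : (((strs (m+1)).filter fun l => tensL l = k ∧ l.headI = false).card
        = ((strs m).filter fun t => tensL t = k).card) := by
      rw [show strs (m+1) = ((strs m).image (List.cons true)) ∪ ((strs m).image (List.cons false)) from rfl,
        Finset.filter_union, Finset.card_union_of_disjoint
          (Finset.disjoint_filter_filter (cons_true_false_disj _ _)),
        Finset.filter_image, Finset.filter_image]
      have h2 : ((strs m).filter fun t => tensL (true :: t) = k ∧ (true :: t).headI = false) = ∅ := by
        rw [Finset.filter_eq_empty_iff]; intro t _; simp
      rw [h2]
      simp only [Finset.image_empty, Finset.card_empty, zero_add]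
      rw [Finset.card_image_of_injective _ (fun a b h => by injection h)]
      congr 1
      apply Finset.filter_congr
      intro t ht
      rw [tensL_cons_ne false (hlen t ht)]
      simp
    constructor
    · rw [hA, split_head]
      have e1 : ((strs m).filter fun t => tensL (true :: t) = k ∧ t.headI = true)
          = ((strs m).filter fun t => tensL t = k ∧ t.headI = true) := by
        apply Finset.filter_congr
        intro t ht
        rw [tensL_cons_ne true (hlen t ht)]
        cases h : t.headI <;> simp [h]
      rw [e1, (ih k).1]
      rcases k with _ | k'
      · have e2 : ((strs m).filter fun t => tensL (true :: t) = 0 ∧ t.headI = false) = ∅ := by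
          rw [Finset.filter_eq_empty_iff]
          intro t ht
          rw [tensL_cons_ne true (hlen t ht)]
          cases h : t.headI <;> simp [h]
        rw [e2]
        simp
      · have e2 : ((strs m).filter fun t => tensL (true :: t) = k' + 1 ∧ t.headI = false)
            = ((strs m).filter fun t => tensL t = k' ∧ t.headI = false) := by
          apply Finset.filter_congr
          intro t ht
          rw [tensL_cons_ne true (hlen t ht)]
          cases h : t.headI <;> simp [h] <;> omega
        rw [e2, (ih k').2]
        have : 2 * (k' + 1) = (2 * k' + 1) + 1 := by ring
        rw [this, Nat.choose_succ_succ]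
        have : 2 * k' + 2 = 2 * (k'+1) := by ring
        rw [Nat.add_comm]
    · rw [hB, split_head, (ih k).1, (ih k).2, Nat.choose_succ_succ]


variable {n : ℕ}

lemma permWord_length (π : Equiv.Perm (Fin n)) : (permWord π).length = n := by
  simp [permWord]

lemma permWord_get (π : Equiv.Perm (Fin n)) (a : Fin (permWord π).length) :
    (permWord π).get a = (π (Fin.cast (permWord_length π) a) : ℕ) + 1 :=
  List.get_ofFn _ _

def trip {n : ℕ} (i j k : Fin n) (a : Fin 3) : Fin n :=
  if (a : ℕ) = 0 then i else if (a : ℕ) = 1 then j else k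

/-- Pigeonhole: under the value bound, no index has two later larger values. -/
lemma no_two (π : Equiv.Perm (Fin n)) (h : ∀ i : Fin n, (n:ℕ) ≤ (π i : ℕ) + i + 2)
    {i j k : Fin n} (hij : i < j) (hjk : j < k)
    (h1 : π i < π j) (h2 : π i < π k) : False := by
  have hjk' : j ≠ k := ne_of_lt hjk
  have hj : j ∉ insert k (Finset.Iic i) := by
    simp only [Finset.mem_insert, Finset.mem_Iic]
    push_neg
    exact ⟨hjk', hij⟩
  have hk : k ∉ Finset.Iic i := by
    simp only [Finset.mem_Iic]
    exact not_le.mpr (hij.trans hjk)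
  set S := insert j (insert k (Finset.Iic i)) with hS
  have hcardS : S.card = (i:ℕ) + 3 := by
    rw [hS, Finset.card_insert_of_notMem hj, Finset.card_insert_of_notMem hk, Fin.card_Iic]
  set T := (Finset.Icc (n - 2 - (i:ℕ)) (n - 1)) with hT
  have hcardT : T.card ≤ (i:ℕ) + 2 := by
    rw [hT, Nat.card_Icc]
    have : (k:ℕ) < n := k.isLt
    have : (i:ℕ) + 2 ≤ (k:ℕ) := by
      have := (Fin.lt_def.mp hij); have := (Fin.lt_def.mp hjk); omega
    omega
  have hmap : ∀ m ∈ S, ((π m : ℕ)) ∈ T := by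
    intro m hm
    have hb := h m
    have hbi := h i
    have hmn : (π m : ℕ) < n := (π m).isLt
    rw [hT]
    simp only [Finset.mem_Icc]
    rw [hS] at hm
    simp only [Finset.mem_insert, Finset.mem_Iic] at hm
    rcases hm with rfl | rfl | hm
    · have := Fin.lt_def.mp h1; omega
    · have := Fin.lt_def.mp h2; omega
    · have := Fin.le_def.mp hm; omega
  have hinj : Set.InjOn (fun m : Fin n => (π m : ℕ)) S := by
    intro a _ b _ hab
    exact π.injective (Fin.val_injective hab)
  have := Finset.card_le_card_of_injOn _ hmap hinj
  omega

/-- If the bound fails at `i`, there are two later positions with larger values. -/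
lemma exists_two (π : Equiv.Perm (Fin n)) {i : Fin n} (hi : (π i : ℕ) + i + 2 < n) :
    ∃ j k : Fin n, i < j ∧ j < k ∧ π i < π j ∧ π i < π k := by
  classical
  set L := Finset.univ.filter (fun j : Fin n => i < j ∧ π i < π j) with hL
  have hcover : (Finset.univ : Finset (Fin n)) ⊆
      Finset.Iic i ∪ (Finset.Iio (π i)).image π.symm ∪ L := by
    intro j _
    simp only [Finset.mem_union, Finset.mem_Iic, Finset.mem_image, Finset.mem_Iio, hL,
      Finset.mem_filter, Finset.mem_univ, true_and]
    by_cases hji : j ≤ i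
    · exact Or.inl (Or.inl hji)
    · push_neg at hji
      by_cases hv : π i < π j
      · exact Or.inr ⟨hji, hv⟩
      · push_neg at hv
        have hne : π j ≠ π i := fun hh => (ne_of_gt hji) (π.injective hh)
        exact Or.inl (Or.inr ⟨π j, lt_of_le_of_ne hv hne, Equiv.symm_apply_apply _ _⟩)
  have hcard : (n:ℕ) ≤ ((i:ℕ) + 1) + (π i : ℕ) + L.card := by
    calc (n:ℕ) = (Finset.univ : Finset (Fin n)).card := by simp
    _ ≤ (Finset.Iic i ∪ (Finset.Iio (π i)).image π.symm ∪ L).card :=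
        Finset.card_le_card hcover
    _ ≤ (Finset.Iic i ∪ (Finset.Iio (π i)).image π.symm).card + L.card :=
        Finset.card_union_le _ _
    _ ≤ ((Finset.Iic i).card + ((Finset.Iio (π i)).image π.symm).card) + L.card :=
        Nat.add_le_add_right (Finset.card_union_le _ _) _
    _ ≤ ((i:ℕ) + 1) + (π i : ℕ) + L.card := by
        rw [Fin.card_Iic, Finset.card_image_of_injective _ π.symm.injective, Fin.card_Iio]
  have h2 : 1 < L.card := by omega
  obtain ⟨a, ha, b, hb, hab⟩ := Finset.one_lt_card.mp h2
  rw [hL, Finset.mem_filter] at ha hb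
  rcases lt_or_gt_of_ne hab with hab' | hab'
  · exact ⟨a, b, ha.2.1, hab', ha.2.2, hb.2.2⟩
  · exact ⟨b, a, hb.2.1, hab', hb.2.2, ha.2.2⟩

set_option maxHeartbeats 2000000 in
lemma avoids_iff (π : Equiv.Perm (Fin n)) :
    AvoidsAll (permWord π) [[1,2,3],[1,3,2]] ↔
      ∀ i : Fin n, (n:ℕ) ≤ (π i : ℕ) + i + 2 := by
  have hlen := permWord_length π
  have hget : ∀ m : Fin n, (permWord π).get (Fin.cast hlen.symm m) = (π m : ℕ) + 1 := by
    intro m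
    rw [permWord_get]
    congr 1
  constructor
  · intro hav
    by_contra hc
    push_neg at hc
    obtain ⟨i, hi⟩ := hc
    obtain ⟨j, k, hij, hjk, h1, h2⟩ := exists_two π hi
    have hij' : (i:ℕ) < j := hij
    have hjk' : (j:ℕ) < k := hjk
    have h1' : (π i : ℕ) < π j := h1
    have h2' : (π i : ℕ) < π k := h2
    have hmono : StrictMono (fun a : Fin 3 => Fin.cast hlen.symm (trip i j k a)) := by
      intro a b hab
      have hab' : (a:ℕ) < b := hab
      have hb3 : (b:ℕ) < 3 := b.isLt
      simp only [Fin.lt_def, Fin.coe_cast, trip]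
      rcases a with ⟨a, ha⟩
      rcases b with ⟨b, hb⟩
      simp only [Fin.val_mk] at hab' hb3 ⊢
      interval_cases a <;> interval_cases b <;> simp <;> omega
    have hiffgen : ∀ a : Fin 3, (permWord π).get (Fin.cast hlen.symm (trip i j k a))
        = (π (trip i j k a) : ℕ) + 1 := fun a => hget _
    rcases lt_or_gt_of_ne (fun hh : π j = π k => (ne_of_lt hjk) (π.injective hh)) with hv | hv
    · have hv' : (π j : ℕ) < π k := hv
      apply hav [1,2,3] (by simp)
      refine ⟨(fun a : Fin 3 => Fin.cast hlen.symm (trip i j k a)), hmono, ?_⟩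
      intro a b
      rw [hiffgen a, hiffgen b]
      rcases a with ⟨a, ha⟩
      rcases b with ⟨b, hb⟩
      have ha' : a < 3 := ha
      have hb' : b < 3 := hb
      interval_cases a <;> interval_cases b <;> simp only [trip] <;>
        norm_num [List.get] <;> omega
    · have hv' : (π k : ℕ) < π j := hv
      apply hav [1,3,2] (by simp)
      refine ⟨(fun a : Fin 3 => Fin.cast hlen.symm (trip i j k a)), hmono, ?_⟩
      intro a b
      rw [hiffgen a, hiffgen b]
      rcases a with ⟨a, ha⟩
      rcases b with ⟨b, hb⟩
      have ha' : a < 3 := ha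
      have hb' : b < 3 := hb
      interval_cases a <;> interval_cases b <;> simp only [trip] <;>
        norm_num [List.get] <;> omega
  · intro hbd ρ hρ hcon
    simp only [List.mem_cons, List.not_mem_nil, or_false] at hρ
    have key : ∀ h3 : ρ.length = 3,
        ρ.get ⟨0, Nat.lt_of_lt_of_eq (by norm_num) h3.symm⟩ <
          ρ.get ⟨1, Nat.lt_of_lt_of_eq (by norm_num) h3.symm⟩ →
        ρ.get ⟨0, Nat.lt_of_lt_of_eq (by norm_num) h3.symm⟩ <
          ρ.get ⟨2, Nat.lt_of_lt_of_eq (by norm_num) h3.symm⟩ → False := by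
      intro h3 h01 h02
      obtain ⟨f, hf, hiff⟩ := hcon
      have e0 : (⟨0, by omega⟩ : Fin ρ.length) < ⟨1, by omega⟩ := by
        simp [Fin.lt_def]
      have e1 : (⟨1, by omega⟩ : Fin ρ.length) < ⟨2, by omega⟩ := by
        simp [Fin.lt_def]
      have hf01 := hf e0
      have hf12 := hf e1
      have hg1 := (hiff ⟨0, by omega⟩ ⟨1, by omega⟩).mp h01
      have hg2 := (hiff ⟨0, by omega⟩ ⟨2, by omega⟩).mp h02
      simp only [permWord_get] at hg1 hg2
      refine no_two π hbd (i := Fin.cast hlen (f ⟨0, by omega⟩))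
        (j := Fin.cast hlen (f ⟨1, by omega⟩)) (k := Fin.cast hlen (f ⟨2, by omega⟩))
        ?_ ?_ ?_ ?_
      · have := Fin.lt_def.mp hf01
        simp only [Fin.lt_def, Fin.coe_cast]
        exact this
      · have := Fin.lt_def.mp hf12
        simp only [Fin.lt_def, Fin.coe_cast]
        exact this
      · simp only [Fin.lt_def]
        omega
      · simp only [Fin.lt_def]
        omega
    rcases hρ with rfl | rfl
    · have hk := key rfl
      exact hk (by decide) (by decide)
    · have hk := key rfl
      exact hk (by decide) (by decide)

lemma tensL_eq_card (l : List Bool) :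
    tensL l = ((Finset.range (l.length - 1)).filter fun i =>
      l.getD i false = true ∧ l.getD (i+1) false = false).card := by
  induction l with
  | nil => simp [tensL]
  | cons a t ih =>
    cases t with
    | nil => simp [tensL]
    | cons b s =>
      rw [show tensL (a :: b :: s) = (if a = true ∧ b = false then 1 else 0) + tensL (b :: s)
        from rfl, ih]
      rw [Finset.card_filter, Finset.card_filter]
      have hlen : (a :: b :: s).length - 1 = ((b :: s).length - 1) + 1 := by
        simp
      rw [hlen, Finset.sum_range_succ']
      simp only [List.getD_cons_succ, List.getD_cons_zero]
      omega

lemma permWord_getD (π : Equiv.Perm (Fin n)) (m : ℕ) (h : m < n) :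
    (permWord π).getD m 0 = (π ⟨m, h⟩ : ℕ) + 1 := by
  rw [List.getD_eq_get (l := permWord π) (i := ⟨m, by rw [permWord_length]; exact h⟩)]
  rw [permWord_get]
  congr 1

/-- `hasL π i`: position `i` has a later, larger entry. -/
def hasL (π : Equiv.Perm (Fin n)) (i : Fin n) : Prop := ∃ j : Fin n, i < j ∧ π i < π j

/-- The boolean word of a permutation. -/
noncomputable def wvec (π : Equiv.Perm (Fin n)) : List Bool :=
  List.ofFn fun i : Fin (n-1) => decide (hasL π ⟨i.val, by omega⟩)

lemma wvec_length (π : Equiv.Perm (Fin n)) : (wvec π).length = n - 1 := by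
  simp [wvec]

lemma wvec_getD (π : Equiv.Perm (Fin n)) (m : ℕ) (h : m < n - 1) :
    (wvec π).getD m false = decide (hasL π ⟨m, by omega⟩) := by
  rw [List.getD_eq_get (l := wvec π) (i := ⟨m, by rw [wvec_length]; exact h⟩)]
  show (List.ofFn fun i : Fin (n-1) => decide (hasL π ⟨i.val, by omega⟩)).get _ = _
  exact List.getElem_ofFn _

lemma wvec_get (π : Equiv.Perm (Fin n)) (a : Fin (wvec π).length)
    (h : a.val < n - 1) :
    (wvec π).get a = decide (hasL π ⟨a.val, by omega⟩) := by
  show (List.ofFn fun i : Fin (n-1) => decide (hasL π ⟨i.val, by omega⟩)).get _ = _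
  exact List.getElem_ofFn _

/-- Under the bound, each position with a later larger entry has the minimal value. -/
lemma val_of_hasL (π : Equiv.Perm (Fin n)) (hbd : ∀ i : Fin n, (n:ℕ) ≤ (π i : ℕ) + i + 2)
    {i : Fin n} (hi : hasL π i) : (π i : ℕ) + i + 2 = n := by
  obtain ⟨j, hij, hv⟩ := hi
  by_contra hne
  have hgt : n < (π i : ℕ) + i + 2 := lt_of_le_of_ne (hbd i) (Ne.symm hne)
  have hj : j ∉ Finset.Iic i := by
    simp only [Finset.mem_Iic]
    exact not_le.mpr hij
  have hcardS : (insert j (Finset.Iic i)).card = (i:ℕ) + 2 := by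
    rw [Finset.card_insert_of_notMem hj, Fin.card_Iic]
  have hmap : ∀ m ∈ insert j (Finset.Iic i), ((π m : ℕ)) ∈ Finset.Icc (n - 1 - (i:ℕ)) (n-1) := by
    intro m hm
    have hbm := hbd m
    have hmn : (π m : ℕ) < n := (π m).isLt
    simp only [Finset.mem_insert, Finset.mem_Iic] at hm
    simp only [Finset.mem_Icc]
    rcases hm with rfl | hm
    · have h1 := Fin.lt_def.mp hv
      omega
    · by_cases hmi : m = i
      · subst hmi
        omega
      · have h1 : (m:ℕ) < i := lt_of_le_of_ne (Fin.le_def.mp hm) (fun h => hmi (Fin.ext h))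
        omega
  have hinj : Set.InjOn (fun m : Fin n => (π m : ℕ)) ↑(insert j (Finset.Iic i)) := by
    intro a _ b _ hab
    exact π.injective (Fin.val_injective hab)
  have hcard := Finset.card_le_card_of_injOn _ hmap hinj
  rw [hcardS, Nat.card_Icc] at hcard
  have hin : (i:ℕ) < n := i.isLt
  omega

lemma not_hasL_ge (π : Equiv.Perm (Fin n)) {i : Fin n} (h : n - 1 ≤ (i:ℕ)) : ¬ hasL π i := by
  rintro ⟨j, hj1, -⟩
  have h1 := Fin.lt_def.mp hj1
  have h2 : (j:ℕ) < n := j.isLt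
  omega

lemma peaks_eq_tensL (π : Equiv.Perm (Fin n))
    (hbd : ∀ i : Fin n, (n:ℕ) ≤ (π i : ℕ) + i + 2) :
    peaks (permWord π) = tensL (wvec π) := by
  rw [tensL_eq_card, peaks, wvec_length, permWord_length]
  have he : n - 1 - 1 = n - 2 := by omega
  rw [he]
  congr 1
  apply Finset.filter_congr
  intro m hm
  simp only [Finset.mem_range] at hm
  have h0 : m < n := by omega
  have h1 : m + 1 < n := by omega
  have h2 : m + 2 < n := by omega
  have h3 : m < n - 1 := by omega
  have h4 : m + 1 < n - 1 := by omega
  rw [permWord_getD π m h0, permWord_getD π (m+1) h1, permWord_getD π (m+2) h2,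
    wvec_getD π m h3, wvec_getD π (m+1) h4]
  simp only [decide_eq_true_eq, decide_eq_false_iff_not]
  have hA : ∀ p : m < n, (⟨m, p⟩ : Fin n) = ⟨m, h0⟩ := fun _ => rfl
  have hB : ∀ p : m + 1 < n, (⟨m+1, p⟩ : Fin n) = ⟨m+1, h1⟩ := fun _ => rfl
  have hC : ∀ p : m + 2 < n, (⟨m+2, p⟩ : Fin n) = ⟨m+2, h2⟩ := fun _ => rfl
  rw [hA, hB, hC]
  constructor
  · rintro ⟨ha, hb⟩
    have ha' : (π ⟨m, h0⟩ : ℕ) < π ⟨m+1, h1⟩ := by omega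
    have hb' : (π ⟨m+2, h2⟩ : ℕ) < π ⟨m+1, h1⟩ := by omega
    constructor
    · exact ⟨⟨m+1, h1⟩, by simp [Fin.lt_def], Fin.lt_def.mpr ha'⟩
    · rintro ⟨j, hj1, hj2⟩
      have hj1' : m + 1 < (j:ℕ) := Fin.lt_def.mp hj1
      have hj2' : (π ⟨m+1, h1⟩ : ℕ) < π j := Fin.lt_def.mp hj2
      exact no_two π hbd (i := ⟨m, h0⟩) (j := ⟨m+1, h1⟩) (k := j)
        (by simp [Fin.lt_def]) hj1 (Fin.lt_def.mpr ha') (Fin.lt_def.mpr (by first | omega | (simp only [Fin.val_mk]; omega)))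
  · rintro ⟨⟨j, hj1, hj2⟩, hnx⟩
    have hj1' : m < (j:ℕ) := Fin.lt_def.mp hj1
    have hj2' : (π ⟨m, h0⟩ : ℕ) < π j := Fin.lt_def.mp hj2
    have hjn : (j:ℕ) < n := j.isLt
    have hasc : (π ⟨m, h0⟩ : ℕ) < π ⟨m+1, h1⟩ := by
      by_contra hcon
      push_neg at hcon
      have hne : π ⟨m+1, h1⟩ ≠ π ⟨m, h0⟩ := fun hh => by
        have := π.injective hh
        simp [Fin.ext_iff] at this
      have hlt : (π ⟨m+1, h1⟩ : ℕ) < π ⟨m, h0⟩ :=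
        lt_of_le_of_ne hcon (fun hh => hne (Fin.ext hh))
      have hjne : (j:ℕ) ≠ m + 1 := by
        intro hh
        have heq : π j = π ⟨m+1, h1⟩ := by
          congr 1
          exact Fin.ext hh
        have := Fin.val_eq_of_eq heq
        omega
      exact hnx ⟨j, Fin.lt_def.mpr (by first | omega | (simp only [Fin.val_mk]; omega)), Fin.lt_def.mpr (by first | omega | (simp only [Fin.val_mk]; omega))⟩
    refine ⟨by omega, ?_⟩
    have hne : π ⟨m+2, h2⟩ ≠ π ⟨m+1, h1⟩ := fun hh => by
      have := π.injective hh
      simp [Fin.ext_iff] at this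
    have hnlt : ¬ ((π ⟨m+1, h1⟩:ℕ) < (π ⟨m+2, h2⟩:ℕ)) := by
      intro hh
      exact hnx ⟨⟨m+2, h2⟩, Fin.lt_def.mpr (by first | omega | (simp only [Fin.val_mk]; omega)), Fin.lt_def.mpr hh⟩
    have := lt_of_le_of_ne (not_lt.mp hnlt) (fun hh => hne (Fin.ext hh))
    omega

lemma max_of_not_hasL (π : Equiv.Perm (Fin n)) {i : Fin n} (hn : ¬ hasL π i) :
    ∀ v : Fin n, v ∉ (Finset.univ.filter (fun m : Fin n => m < i)).image π → v ≤ π i := by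
  intro v hv
  obtain ⟨j, rfl⟩ : ∃ j, π j = v := ⟨π.symm v, by simp⟩
  have hji : ¬ j < i := fun hh => hv (Finset.mem_image.mpr
    ⟨j, Finset.mem_filter.mpr ⟨Finset.mem_univ _, hh⟩, rfl⟩)
  rcases eq_or_lt_of_le (not_lt.mp hji) with rfl | hh
  · exact le_refl _
  · exact not_lt.mp (fun hx => hn ⟨j, hh, hx⟩)

lemma wvec_inj (π π' : Equiv.Perm (Fin n))
    (hbd : ∀ i : Fin n, (n:ℕ) ≤ (π i : ℕ) + i + 2)
    (hbd' : ∀ i : Fin n, (n:ℕ) ≤ (π' i : ℕ) + i + 2)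
    (h : wvec π = wvec π') : π = π' := by
  classical
  by_contra hne
  have hDne : (Finset.univ.filter fun m : Fin n => π m ≠ π' m).Nonempty := by
    by_contra h'
    rw [Finset.not_nonempty_iff_eq_empty, Finset.filter_eq_empty_iff] at h'
    exact hne (Equiv.ext fun m => not_ne_iff.mp (h' (Finset.mem_univ m)))
  set D := Finset.univ.filter fun m : Fin n => π m ≠ π' m with hD
  set i := D.min' hDne with hi
  have hiD : i ∈ D := D.min'_mem hDne
  have hine : π i ≠ π' i := (Finset.mem_filter.mp hiD).2
  have hmin : ∀ m : Fin n, m < i → π m = π' m := by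
    intro m hm
    by_contra hx
    exact absurd (D.min'_le m (Finset.mem_filter.mpr ⟨Finset.mem_univ _, hx⟩)) (not_le.mpr hm)
  have hiff : hasL π i ↔ hasL π' i := by
    by_cases hin : (i:ℕ) < n - 1
    · have hc := congrArg (fun l => l.getD (i:ℕ) false) h
      simp only [wvec_getD _ _ hin] at hc
      have : (⟨(i:ℕ), by omega⟩ : Fin n) = i := Fin.ext rfl
      rw [this] at hc
      simpa [decide_eq_decide] using hc
    · have h1 := not_hasL_ge π (i := i) (by omega)
      have h2 := not_hasL_ge π' (i := i) (by omega)
      simp [h1, h2]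
  by_cases hc : hasL π i
  · have hc' := hiff.mp hc
    have e1 := val_of_hasL π hbd hc
    have e2 := val_of_hasL π' hbd' hc'
    exact hine (Fin.ext (by omega))
  · have hc' := fun x => hc (hiff.mpr x)
    have hm1 : π' i ∉ (Finset.univ.filter (fun m : Fin n => m < i)).image π := by
      intro hmem
      obtain ⟨m, hm, heq⟩ := Finset.mem_image.mp hmem
      have hmi := (Finset.mem_filter.mp hm).2
      rw [hmin m hmi] at heq
      exact absurd (π'.injective heq) (ne_of_lt hmi)
    have hm2 : π i ∉ (Finset.univ.filter (fun m : Fin n => m < i)).image π' := by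
      intro hmem
      obtain ⟨m, hm, heq⟩ := Finset.mem_image.mp hmem
      have hmi := (Finset.mem_filter.mp hm).2
      rw [← hmin m hmi] at heq
      exact absurd (π.injective heq) (ne_of_lt hmi)
    exact hine (le_antisymm (max_of_not_hasL π' hc' _ hm2) (max_of_not_hasL π hc _ hm1))

/-- Length of the run of `true`s ending just before `m`. -/
def runF (W : ℕ → Bool) : ℕ → ℕ
  | 0 => 0
  | m+1 => if W m then runF W m + 1 else 0

lemma runF_le (W : ℕ → Bool) (m : ℕ) : runF W m ≤ m := by
  induction m with
  | zero => simp [runF]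
  | succ m ih =>
    rw [runF]
    split <;> omega

lemma runF_ones (W : ℕ → Bool) : ∀ m p : ℕ, m - runF W m ≤ p → p < m → W p = true := by
  intro m
  induction m with
  | zero => omega
  | succ m ih =>
    intro p h1 h2
    rw [runF] at h1
    by_cases hw : W m
    · rw [if_pos hw] at h1
      rcases Nat.lt_succ_iff_lt_or_eq.mp h2 with h3 | rfl
      · exact ih p (by have := runF_le W m; omega) h3
      · exact hw
    · rw [if_neg hw] at h1
      omega

lemma runF_boundary (W : ℕ → Bool) (m : ℕ) (h : runF W m < m) :
    W (m - runF W m - 1) = false := by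
  induction m with
  | zero => omega
  | succ m ih =>
    by_cases hw : W m
    · have he : runF W (m+1) = runF W m + 1 := by rw [runF, if_pos hw]
      rw [he] at h ⊢
      have h' : runF W m < m := by omega
      have := ih h'
      have : m + 1 - (runF W m + 1) - 1 = m - runF W m - 1 := by omega
      rw [this]
      exact ih h'
    · have he : runF W (m+1) = 0 := by rw [runF, if_neg hw]
      rw [he]
      simpa using eq_false_of_ne_true hw
  
lemma runF_ge (W : ℕ → Bool) {a : ℕ} : ∀ {b : ℕ}, a ≤ b →
    (∀ p, a ≤ p → p < b → W p = true) → b - a ≤ runF W b := by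
  intro b
  induction b with
  | zero => omega
  | succ c ih =>
    intro hab hall
    by_cases hac : a ≤ c
    · have hwc : W c = true := hall c hac (by omega)
      have := ih hac (fun p hp1 hp2 => hall p hp1 (by omega))
      rw [runF, if_pos hwc]
      omega
    · omega

/-- The permutation built from a boolean word. -/
def buildF (W : ℕ → Bool) (n : ℕ) (j : Fin n) : Fin n :=
  if W j.val then ⟨n - 2 - j.val, by have := j.isLt; omega⟩
  else ⟨n - 1 - (j.val - runF W j.val), by have := j.isLt; omega⟩

lemma buildF_val_true (W : ℕ → Bool) (j : Fin n) (h : W j.val = true) :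
    (buildF W n j : ℕ) = n - 2 - j.val := by
  rw [buildF, if_pos h]

lemma buildF_val_false (W : ℕ → Bool) (j : Fin n) (h : W j.val = false) :
    (buildF W n j : ℕ) = n - 1 - (j.val - runF W j.val) := by
  rw [buildF, if_neg (by simp [h])]

lemma buildF_injective (W : ℕ → Bool) (hW : ∀ m, W m = true → m < n - 1) :
    Function.Injective (buildF W n) := by
  have key : ∀ x y : Fin n, W x.val = false → W y.val = false → x.val < y.val →
      x.val < y.val - runF W y.val := by
    intro x y hx hy hxy
    by_contra hc
    push_neg at hc
    have := runF_ones W y.val x.val hc hxy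
    rw [hx] at this
    simp at this
  intro a b hab
  have hval : (buildF W n a : ℕ) = (buildF W n b : ℕ) := congrArg Fin.val hab
  have ha' := a.isLt
  have hb' := b.isLt
  by_cases ha : W a.val = true <;> by_cases hb : W b.val = true
  · rw [buildF_val_true W a ha, buildF_val_true W b hb] at hval
    have h1 := hW _ ha
    have h2 := hW _ hb
    exact Fin.ext (by omega)
  · have hb2 : W b.val = false := eq_false_of_ne_true hb
    rw [buildF_val_true W a ha, buildF_val_false W b hb2] at hval
    have h1 := hW _ ha
    have h2 := runF_le W b.val
    exfalso
    have hd : b.val - runF W b.val = a.val + 1 := by omega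
    have hrb : runF W b.val < b.val := by omega
    have := runF_boundary W b.val hrb
    rw [show b.val - runF W b.val - 1 = a.val by omega, ha] at this
    simp at this
  · have ha2 : W a.val = false := eq_false_of_ne_true ha
    rw [buildF_val_false W a ha2, buildF_val_true W b hb] at hval
    have h1 := hW _ hb
    have h2 := runF_le W a.val
    exfalso
    have hd : a.val - runF W a.val = b.val + 1 := by omega
    have hra : runF W a.val < a.val := by omega
    have := runF_boundary W a.val hra
    rw [show a.val - runF W a.val - 1 = b.val by omega, hb] at this
    simp at this
  · have ha2 : W a.val = false := eq_false_of_ne_true ha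
    have hb2 : W b.val = false := eq_false_of_ne_true hb
    rw [buildF_val_false W a ha2, buildF_val_false W b hb2] at hval
    have h2 := runF_le W a.val
    have h3 := runF_le W b.val
    rcases lt_trichotomy a.val b.val with hl | hl | hl
    · have := key a b ha2 hb2 hl
      omega
    · exact Fin.ext hl
    · have := key b a hb2 ha2 hl
      omega

lemma buildF_bound (W : ℕ → Bool) (hW : ∀ m, W m = true → m < n - 1) (i : Fin n) :
    (n : ℕ) ≤ (buildF W n i : ℕ) + i + 2 := by
  have h1 := i.isLt
  have h2 := runF_le W i.val
  by_cases hw : W i.val = true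
  · rw [buildF_val_true W i hw]
    have := hW _ hw
    omega
  · rw [buildF_val_false W i (eq_false_of_ne_true hw)]
    omega

lemma buildF_lt_of_true (W : ℕ → Bool) (hW : ∀ m, W m = true → m < n - 1)
    {i : Fin n} (hi : W i.val = true) :
    ∃ j : Fin n, i < j ∧ (buildF W n i : ℕ) < buildF W n j := by
  classical
  have hi' : i.val < n - 1 := hW _ hi
  have hPn : i.val < n - 1 ∧ W (n-1) = false := by
    refine ⟨hi', ?_⟩
    by_contra hc
    have := hW _ (by simpa using hc)
    omega
  have hex : ∃ m, i.val < m ∧ W m = false := ⟨n-1, hPn⟩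
  set j := Nat.find hex with hj
  obtain ⟨hj1, hj2⟩ := Nat.find_spec hex
  have hjle : j ≤ n - 1 := Nat.find_min' hex hPn
  have hall : ∀ p, i.val ≤ p → p < j → W p = true := by
    intro p hp1 hp2
    rcases eq_or_lt_of_le hp1 with rfl | hp1'
    · exact hi
    · by_contra hc
      exact absurd ⟨hp1', eq_false_of_ne_true hc⟩ (Nat.find_min hex hp2)
  have hge : j - i.val ≤ runF W j := runF_ge W (le_of_lt hj1) hall
  have hrle : runF W j ≤ j := runF_le W j
  refine ⟨⟨j, by omega⟩, Fin.lt_def.mpr hj1, ?_⟩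
  have v1 := buildF_val_true W i hi
  have v2 := buildF_val_false W (⟨j, by omega⟩ : Fin n) hj2
  rw [v1, v2]
  simp only [Fin.val_mk] at v2 ⊢
  have hi2 := i.isLt
  omega

lemma buildF_not_lt_of_false (W : ℕ → Bool) (hW : ∀ m, W m = true → m < n - 1)
    {i j : Fin n} (hi : W i.val = false) (hij : i < j) :
    (buildF W n j : ℕ) < buildF W n i := by
  have hij' : i.val < j.val := Fin.lt_def.mp hij
  have hjn := j.isLt
  have hri := runF_le W i.val
  have hrj := runF_le W j.val
  have v1 := buildF_val_false W i hi
  cases hwj : W j.val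
  · have hkey : i.val < j.val - runF W j.val := by
      by_contra hc
      push_neg at hc
      have := runF_ones W j.val i.val hc hij'
      rw [hi] at this
      simp at this
    rw [buildF_val_false W j hwj, v1]
    omega
  · rw [buildF_val_true W j hwj, v1]
    have := hW _ hwj
    omega

lemma exists_perm_of_word (hn : 1 ≤ n) (l : List Bool) (hl : l.length = n - 1) :
    ∃ π : Equiv.Perm (Fin n), (∀ i : Fin n, (n:ℕ) ≤ (π i : ℕ) + i + 2) ∧ wvec π = l := by
  classical
  set W : ℕ → Bool := fun m => l.getD m false with hWdef
  have hW : ∀ m, W m = true → m < n - 1 := by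
    intro m hm
    by_contra hc
    push_neg at hc
    rw [hWdef] at hm
    simp only at hm
    rw [List.getD_eq_default _ _ (by omega)] at hm
    simp at hm
  have hinj := buildF_injective W hW
  have hbij := Finite.injective_iff_bijective.mp hinj
  refine ⟨Equiv.ofBijective _ hbij, ?_, ?_⟩
  · intro i
    exact buildF_bound W hW i
  · have hiff : ∀ i : Fin n, hasL (Equiv.ofBijective _ hbij) i ↔ W i.val = true := by
      intro i
      constructor
      · rintro ⟨j, hij, hv⟩
        by_contra hc
        have hc' : W i.val = false := eq_false_of_ne_true hc
        have := buildF_not_lt_of_false W hW hc' hij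
        have hv' : (buildF W n i : ℕ) < buildF W n j := Fin.lt_def.mp hv
        omega
      · intro hi
        obtain ⟨j, h1, h2⟩ := buildF_lt_of_true W hW hi
        exact ⟨j, h1, Fin.lt_def.mpr h2⟩
    apply List.ext_get (by rw [wvec_length]; omega)
    intro m h1 h2
    have h1' : m < n - 1 := by
      have := h1
      rwa [wvec_length] at this
    rw [wvec_get _ _ h1']
    have hWm : W m = l.get ⟨m, h2⟩ := by
      rw [hWdef]
      simp only
      rw [List.getD_eq_get (l := l) (i := ⟨m, h2⟩)]
    cases hx : l.get ⟨m, h2⟩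
    · refine decide_eq_false ?_
      rw [(hiff ⟨m, by omega⟩)]
      show ¬ W m = true
      rw [hWm, hx]
      simp
    · refine decide_eq_true ?_
      rw [(hiff ⟨m, by omega⟩)]
      show W m = true
      rw [hWm, hx]


lemma count_strs_total (m k : ℕ) :
    ((strs m).filter fun l => tensL l = k).card = Nat.choose (m+1) (2*k+1) := by
  rcases Nat.eq_zero_or_pos m with rfl | hm
  · rcases k with _ | k
    · rw [show strs 0 = {[]} from rfl]
      rw [show ({[]} : Finset (List Bool)).filter (fun l => tensL l = 0) = {[]} by
        rw [Finset.filter_eq_self]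
        intro l hl
        simp only [Finset.mem_singleton] at hl
        subst hl
        rfl]
      simp
    · rw [show strs 0 = {[]} from rfl]
      rw [show ({[]} : Finset (List Bool)).filter (fun l => tensL l = k + 1) = ∅ by
        rw [Finset.filter_eq_empty_iff]
        intro l hl
        simp only [Finset.mem_singleton] at hl
        subst hl
        show ¬ tensL [] = k + 1
        simp [tensL]]
      rw [Finset.card_empty, eq_comm, Nat.choose_eq_zero_iff]
      omega
  · rw [split_head, (count_strs m hm k).1, (count_strs m hm k).2, Nat.choose_succ_succ]

theorem stmt14 (n k : ℕ) (hn : 1 ≤ n) :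
    acount n k peaks [[1,2,3],[1,3,2]] = Nat.choose n (2 * k + 1) := by
  classical
  rw [acount]
  rw [show Nat.choose n (2*k+1) = Nat.choose ((n-1)+1) (2*k+1) by congr 1; omega]
  rw [← count_strs_total (n-1) k]
  apply Finset.card_bij (fun π _ => wvec π)
  · intro π hπ
    obtain ⟨hav, hpk⟩ := (Finset.mem_filter.mp hπ).2
    have hbd := (avoids_iff π).mp hav
    refine Finset.mem_filter.mpr ⟨mem_strs.mpr (wvec_length π), ?_⟩
    rw [← peaks_eq_tensL π hbd, hpk]
  · intro π hπ π' hπ' heq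
    exact wvec_inj π π' ((avoids_iff π).mp (Finset.mem_filter.mp hπ).2.1)
      ((avoids_iff π').mp (Finset.mem_filter.mp hπ').2.1) heq
  · intro l hl
    obtain ⟨hls, hlt⟩ := Finset.mem_filter.mp hl
    have hlen := mem_strs.mp hls
    obtain ⟨π, hbd, hwv⟩ := exists_perm_of_word hn l hlen
    refine ⟨π, Finset.mem_filter.mpr ⟨Finset.mem_univ _, (avoids_iff π).mpr hbd, ?_⟩, hwv⟩
    rw [peaks_eq_tensL π hbd, hwv, hlt]
end

section
/- For all n ≥ 1, every permutation π of length n avoiding both 132 and 321 has the form π = (I_a ⊖ I_b) ⊕ I_{n−a−b} for some integers a, b with 1 ≤ a ≤ n and 0 ≤ b ≤ n − a. -/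
open scoped Classical

/-- The increasing word `1 2 ⋯ m` (the identity permutation `I_m`). -/
def Iword (m : ℕ) : List ℕ := (List.range m).map (· + 1)

/-- Direct sum `α ⊕ β` of permutation words. -/
def oplus (α β : List ℕ) : List ℕ := α ++ β.map (· + α.length)

/-- Skew sum `α ⊖ β` of permutation words. -/
def ominus (α β : List ℕ) : List ℕ := α.map (· + β.length) ++ β

/-! Count positions and values from `0` and put `p = π⁻¹ 0`, `b = π 0`. Avoiding `321` makes `π`
increasing on the positions before `p`, avoiding `132` makes it increasing from `p` on. Climbing
through the values one at a time then shows that `0, …, b - 1` sit at positions `p, …, p + b - 1`.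
Since `132` and `321` are involutions, `π⁻¹` avoids them as well, and the same statement for `π⁻¹`
says that the positions `0, …, p - 1` carry `b, …, b + p - 1`. Every remaining position `i` lies in
the increasing tail and its entry is at least `p + b`, so exactly the positions before `i` carry
smaller entries, which makes `i` a fixed point. -/

theorem containsPat_132 {l : List ℕ} {i j k : Fin l.length} (hij : i < j) (hjk : j < k)
    (hik : l.get i < l.get k) (hkj : l.get k < l.get j) : ContainsPat l [1, 3, 2] :=
  ⟨![i, j, k], by
    rw [Fin.strictMono_iff_lt_succ]
    intro t
    fin_cases t <;> simpa,
   fun a b => by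
    simp only [List.get_eq_getElem] at *
    fin_cases a <;> fin_cases b <;> simp <;> omega⟩

theorem containsPat_321 {l : List ℕ} {i j k : Fin l.length} (hij : i < j) (hjk : j < k)
    (hkj : l.get k < l.get j) (hji : l.get j < l.get i) : ContainsPat l [3, 2, 1] :=
  ⟨![i, j, k], by
    rw [Fin.strictMono_iff_lt_succ]
    intro t
    fin_cases t <;> simpa,
   fun a b => by
    simp only [List.get_eq_getElem] at *
    fin_cases a <;> fin_cases b <;> simp <;> omega⟩

def Avoids132 {n : ℕ} (σ : Equiv.Perm (Fin n)) : Prop :=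
  ∀ ⦃i j k : Fin n⦄, i < j → j < k → ¬ (σ i < σ k ∧ σ k < σ j)

def Avoids321 {n : ℕ} (σ : Equiv.Perm (Fin n)) : Prop :=
  ∀ ⦃i j k : Fin n⦄, i < j → j < k → ¬ (σ k < σ j ∧ σ j < σ i)

section

variable {n : ℕ} {σ : Equiv.Perm (Fin n)}

theorem permWord_get_cast (i : Fin n) :
    (permWord σ).get (Fin.cast (List.length_ofFn).symm i) = σ i + 1 := by
  simp [permWord]

theorem avoids132_of_not_containsPat (h : ¬ ContainsPat (permWord σ) [1, 3, 2]) :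
    Avoids132 σ := by
  rintro i j k hij hjk ⟨hik, hkj⟩
  refine h (containsPat_132 (i := i.cast List.length_ofFn.symm) (j := j.cast List.length_ofFn.symm)
    (k := k.cast List.length_ofFn.symm) hij hjk ?_ ?_) <;>
  simp only [permWord_get_cast] <;> omega

theorem avoids321_of_not_containsPat (h : ¬ ContainsPat (permWord σ) [3, 2, 1]) :
    Avoids321 σ := by
  rintro i j k hij hjk ⟨hkj, hji⟩
  refine h (containsPat_321 (i := i.cast List.length_ofFn.symm) (j := j.cast List.length_ofFn.symm)
    (k := k.cast List.length_ofFn.symm) hij hjk ?_ ?_) <;>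
  simp only [permWord_get_cast] <;> omega

theorem Avoids132.inv (h : Avoids132 σ) : Avoids132 σ⁻¹ := by
  rintro i j k hij hjk ⟨hik, hkj⟩
  exact h hik hkj (by simpa using And.intro hij hjk)

theorem Avoids321.inv (h : Avoids321 σ) : Avoids321 σ⁻¹ := by
  rintro i j k hij hjk ⟨hkj, hji⟩
  exact h hkj hji (by simpa using And.intro hij hjk)

end

theorem Equiv.Perm.apply_eq_self_of_forall_apply_lt_iff {n : ℕ} (σ : Equiv.Perm (Fin n))
    {i : Fin n} (h : ∀ j, σ j < σ i ↔ j < i) : σ i = i := by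
  have hcard : (Finset.Iio (σ i)).card = (Finset.Iio i).card := by
    rw [← Finset.card_map σ.symm.toEmbedding]
    congr 1
    ext j
    simp [h]
  simpa [Fin.card_Iio, Fin.ext_iff] using hcard

section

variable {n : ℕ} [NeZero n] {σ : Equiv.Perm (Fin n)}

theorem zero_lt_apply_of_ne_inv_zero {j : Fin n} (hj : j ≠ σ⁻¹ 0) : 0 < σ j :=
  Fin.pos_iff_ne_zero.2 fun h => hj (Equiv.Perm.inv_eq_iff_eq.2 h.symm).symm

theorem Avoids321.strictMonoOn_Iio (h : Avoids321 σ) : StrictMonoOn σ (Set.Iio (σ⁻¹ 0)) := by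
  intro i _ j hj hij
  by_contra hji
  exact h hij hj ⟨by simpa using zero_lt_apply_of_ne_inv_zero hj.ne,
    lt_of_le_of_ne (not_lt.1 hji) (σ.injective.ne hij.ne')⟩

theorem Avoids132.strictMonoOn_Ici (h : Avoids132 σ) : StrictMonoOn σ (Set.Ici (σ⁻¹ 0)) := by
  intro i hi j _ hij
  have hj0 : 0 < σ j := zero_lt_apply_of_ne_inv_zero (lt_of_le_of_lt hi hij).ne'
  rcases (Set.mem_Ici.1 hi).eq_or_lt with rfl | hpi
  · simpa using hj0
  by_contra hji
  exact h hpi hij ⟨by simpa using hj0, lt_of_le_of_ne (not_lt.1 hji) (σ.injective.ne hij.ne')⟩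


theorem val_eq_of_apply_lt_apply_zero (h132 : Avoids132 σ) (h321 : Avoids321 σ) {j : Fin n}
    (hj : σ j < σ 0) : (j : ℕ) = σ⁻¹ 0 + σ j := by
  suffices ∀ m (j : Fin n), (σ j : ℕ) = m → σ j < σ 0 → (j : ℕ) = σ⁻¹ 0 + m from
    this _ j rfl hj
  have hmono := h132.strictMonoOn_Ici
  intro m
  induction m with
  | zero =>
    intro j hj _
    rw [Equiv.Perm.inv_eq_iff_eq.2 (Fin.ext hj : σ j = 0).symm, Nat.add_zero]
  | succ m ih =>
    intro j hjm hj
    obtain ⟨u, hu⟩ := σ.surjective ⟨m, by omega⟩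
    have hum : (u : ℕ) = σ⁻¹ 0 + m :=
      ih u (by simp [hu]) (lt_trans (by simp [Fin.lt_def, hu, hjm]) hj)
    have hpj : σ⁻¹ 0 ≤ j := by
      by_contra! hjp
      exact hj.not_ge (h321.strictMonoOn_Iio.monotoneOn (lt_of_le_of_lt (Fin.zero_le _) hjp) hjp
        (Fin.zero_le j))
    have huj : u < j := by
      by_contra! hju
      have := hmono.monotoneOn hpj (le_trans hpj hju) hju
      simp only [Fin.le_def, hu] at this
      omega
    -- no entry of the increasing tail fits strictly between the values `m = σ u` and `m + 1 = σ j`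
    have hjle : (j : ℕ) ≤ σ⁻¹ 0 + m + 1 := by
      by_contra! hc
      obtain ⟨x, hx⟩ : ∃ x : Fin n, (x : ℕ) = σ⁻¹ 0 + m + 1 := ⟨⟨_, by omega⟩, rfl⟩
      have hpx : σ⁻¹ 0 ≤ x := Fin.le_def.2 (by omega)
      have h1 := hmono (Fin.le_def.2 (by omega)) hpx (show u < x from Fin.lt_def.2 (by omega))
      have h2 := hmono hpx hpj (show x < j from Fin.lt_def.2 (by omega))
      simp only [Fin.lt_def, hu] at h1 h2
      omega
    rw [Fin.lt_def] at huj
    omega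

theorem val_apply_of_lt_inv_zero (h132 : Avoids132 σ) (h321 : Avoids321 σ) {i : Fin n}
    (hi : i < σ⁻¹ 0) : (σ i : ℕ) = σ 0 + i := by
  have := val_eq_of_apply_lt_apply_zero h132.inv h321.inv (j := σ i)
  simpa using this (by simpa using hi)


theorem le_val_apply_of_le (h132 : Avoids132 σ) (h321 : Avoids321 σ) {i : Fin n}
    (hi : (σ⁻¹ 0 : ℕ) + σ 0 ≤ i) : (σ⁻¹ 0 : ℕ) + σ 0 ≤ σ i := by
  by_contra! hlt
  rcases lt_or_ge (σ i : ℕ) (σ 0) with hb | hb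
  · have := val_eq_of_apply_lt_apply_zero h132 h321 (Fin.lt_def.2 hb)
    omega
  · obtain ⟨k, hk⟩ : ∃ k : Fin n, (k : ℕ) = σ i - σ 0 := ⟨⟨_, by omega⟩, rfl⟩
    have hσk := val_apply_of_lt_inv_zero h132 h321 (Fin.lt_def.2 (by omega) : k < σ⁻¹ 0)
    have hki : k = i := σ.injective (Fin.ext (by omega))
    omega

theorem apply_eq_self_of_le (h132 : Avoids132 σ) (h321 : Avoids321 σ) {i : Fin n}
    (hi : (σ⁻¹ 0 : ℕ) + σ 0 ≤ i) : σ i = i := by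
  have hpi : σ⁻¹ 0 ≤ i := Fin.le_def.2 (by omega)
  refine σ.apply_eq_self_of_forall_apply_lt_iff fun j => ⟨fun hji => ?_, fun hji => ?_⟩
  · by_contra! hij
    exact hji.not_ge (h132.strictMonoOn_Ici.monotoneOn hpi (hpi.trans hij) hij)
  · rcases lt_or_ge j (σ⁻¹ 0) with hjp | hpj
    · have hσj := val_apply_of_lt_inv_zero h132 h321 hjp
      have hσi := le_val_apply_of_le h132 h321 hi
      rw [Fin.lt_def] at hjp ⊢
      omega
    · exact h132.strictMonoOn_Ici hpj hpi hji

theorem inv_zero_add_apply_zero_le (h132 : Avoids132 σ) (h321 : Avoids321 σ) :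
    (σ⁻¹ 0 : ℕ) + σ 0 ≤ n := by
  rcases Nat.eq_zero_or_pos (σ 0 : ℕ) with h0 | h0
  · have := (σ⁻¹ 0).isLt
    omega
  · obtain ⟨v, hv⟩ : ∃ v : Fin n, (v : ℕ) = σ 0 - 1 := ⟨⟨_, by omega⟩, rfl⟩
    obtain ⟨j, rfl⟩ := σ.surjective v
    have := val_eq_of_apply_lt_apply_zero h132 h321 (Fin.lt_def.2 (by omega) : σ j < σ 0)
    have := j.isLt
    omega

end

/-- The entries of `(I_a ⊖ I_b) ⊕ I_c`, counted from `0` in both positions and values. -/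
def skewBlockVal (a b i : ℕ) : ℕ := if i < a then b + i else if i < a + b then i - a else i

theorem skewBlockVal_zero_right (a i : ℕ) : skewBlockVal a 0 i = i := by
  unfold skewBlockVal
  split_ifs <;> omega

theorem val_apply_eq_skewBlockVal {n : ℕ} [NeZero n] {σ : Equiv.Perm (Fin n)}
    (h132 : Avoids132 σ) (h321 : Avoids321 σ) (i : Fin n) :
    (σ i : ℕ) = skewBlockVal (σ⁻¹ 0) (σ 0) i := by
  unfold skewBlockVal
  split_ifs with hp hpb
  · exact val_apply_of_lt_inv_zero h132 h321 (Fin.lt_def.2 hp)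
  · obtain ⟨v, hv⟩ : ∃ v : Fin n, (v : ℕ) = i - σ⁻¹ 0 := ⟨⟨_, by omega⟩, rfl⟩
    obtain ⟨j, rfl⟩ := σ.surjective v
    have hj := val_eq_of_apply_lt_apply_zero h132 h321 (Fin.lt_def.2 (by omega) : σ j < σ 0)
    rw [show i = j from Fin.ext (by omega)]
    omega
  · rw [apply_eq_self_of_le h132 h321 (by omega)]

theorem ofFn_skewBlockVal {n a b : ℕ} (hab : a + b ≤ n) :
    List.ofFn (fun i : Fin n => skewBlockVal a b i + 1) =
      oplus (ominus (Iword a) (Iword b)) (Iword (n - a - b)) := by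
  apply List.ext_getElem
  · simp [oplus, ominus, Iword]
    omega
  · intro i h1 _
    simp only [List.length_ofFn] at h1
    simp only [List.getElem_ofFn, skewBlockVal, oplus, ominus, Iword, List.getElem_append,
      List.getElem_map, List.getElem_range, List.length_append, List.length_map, List.length_range]
    split_ifs <;> omega

theorem permWord_eq_oplus_ominus {n a b : ℕ} {π : Equiv.Perm (Fin n)} (hab : a + b ≤ n)
    (h : ∀ i, (π i : ℕ) = skewBlockVal a b i) :
    permWord π = oplus (ominus (Iword a) (Iword b)) (Iword (n - a - b)) := by
  rw [← ofFn_skewBlockVal hab, permWord]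
  simp only [h]

theorem stmt16 (n : ℕ) (hn : 1 ≤ n) (π : Equiv.Perm (Fin n))
    (h : AvoidsAll (permWord π) [[1,3,2],[3,2,1]]) :
    ∃ a b : ℕ, 1 ≤ a ∧ a ≤ n ∧ b ≤ n - a ∧
      permWord π = oplus (ominus (Iword a) (Iword b)) (Iword (n - a - b)) := by
  have : NeZero n := ⟨by omega⟩
  have h132 := avoids132_of_not_containsPat (h _ (by simp))
  have h321 := avoids321_of_not_containsPat (h _ (by simp))
  have hval := val_apply_eq_skewBlockVal h132 h321
  have hle := inv_zero_add_apply_zero_le h132 h321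
  rcases Nat.eq_zero_or_pos (π⁻¹ 0 : ℕ) with hp | hp
  · -- here `b = 0` too, and `π = I_n` is also `(I_1 ⊖ I_0) ⊕ I_{n-1}`
    have hb : (π 0 : ℕ) = 0 := by rw [← Equiv.Perm.inv_eq_iff_eq.1 (Fin.ext hp)]; rfl
    refine ⟨1, 0, le_rfl, hn, Nat.zero_le _, permWord_eq_oplus_ominus hn fun i => ?_⟩
    rw [hval, hp, hb, skewBlockVal_zero_right, skewBlockVal_zero_right]
  · exact ⟨_, _, hp, by omega, by omega, permWord_eq_oplus_ominus hle hval⟩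
end

section
/- For all n ≥ 4, the number of permutations of length n avoiding both 132 and 321 with exactly k double ascents equals 1 if k = n−2, equals n if k = n−3, equals C(n,2) − n if k = n−4, and equals 0 for all other values of k. -/
open scoped Classical

namespace Aux18
open Finset

lemma permWord_length {n : ℕ} (π : Equiv.Perm (Fin n)) : (permWord π).length = n := by
  simp [permWord]

noncomputable def wv {n : ℕ} (π : Equiv.Perm (Fin n)) (x : ℕ) : ℕ := (permWord π).getD x 0

lemma wv_eq {n : ℕ} (π : Equiv.Perm (Fin n)) {x : ℕ} (h : x < n) :
    wv π x = (π ⟨x, h⟩ : ℕ) + 1 := by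
  unfold wv permWord
  rw [List.getD_eq_getElem _ _ (by simpa using h)]
  simp

lemma permWord_get {n : ℕ} (π : Equiv.Perm (Fin n)) (j : Fin (permWord π).length) :
    (permWord π).get j = wv π (j : ℕ) := by
  rw [List.get_eq_getElem]
  exact (List.getD_eq_getElem _ _ j.isLt).symm


lemma wv_pos {n : ℕ} (π : Equiv.Perm (Fin n)) {x : ℕ} (h : x < n) : 1 ≤ wv π x := by
  rw [wv_eq π h]; omega

lemma wv_le {n : ℕ} (π : Equiv.Perm (Fin n)) {x : ℕ} (h : x < n) : wv π x ≤ n := by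
  rw [wv_eq π h]; have := (π ⟨x, h⟩).isLt; omega

lemma wv_inj {n : ℕ} (π : Equiv.Perm (Fin n)) {x y : ℕ} (hx : x < n) (hy : y < n)
    (h : wv π x = wv π y) : x = y := by
  rw [wv_eq π hx, wv_eq π hy] at h
  have := π.injective (Fin.val_injective (by omega : ((π ⟨x,hx⟩ : Fin n) : ℕ) = π ⟨y,hy⟩))
  simpa using congrArg Fin.val this

lemma wv_surj {n : ℕ} (π : Equiv.Perm (Fin n)) {c : ℕ} (h1 : 1 ≤ c) (h2 : c ≤ n) :
    ∃ r, r < n ∧ wv π r = c := by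
  refine ⟨π.symm ⟨c-1, by omega⟩, (π.symm _).isLt, ?_⟩
  rw [wv_eq π (π.symm _).isLt]
  simp only [Fin.eta, Equiv.apply_symm_apply]
  omega

lemma wv_lt_iff {n : ℕ} (τ : Equiv.Perm (Fin n)) {x y : ℕ} (hx : x < n) (hy : y < n) :
    wv τ x < wv τ y ↔ τ ⟨x, hx⟩ < τ ⟨y, hy⟩ := by
  rw [wv_eq τ hx, wv_eq τ hy, Fin.lt_def]
  omega

lemma chain_lt (u : ℕ → ℕ) (a b : ℕ) (h : ∀ t, a ≤ t → t + 1 ≤ b → u t < u (t+1)) :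
    ∀ x y, a ≤ x → x < y → y ≤ b → u x < u y := by
  intro x y hx hxy hy
  induction y with
  | zero => omega
  | succ t ih =>
    rcases Nat.lt_or_ge x t with h' | h'
    · exact (ih h' (by omega)).trans (h t (by omega) (by omega))
    · have : x = t := by omega
      subst this
      exact h x hx hy

-- building containment
lemma toContains {n : ℕ} (π : Equiv.Perm (Fin n)) (ρ : List ℕ) (hρ : ρ.length = 3)
    (p q r : ℕ) (hpq : p < q) (hqr : q < r) (hr : r < n)
    (hiff : ∀ a b : Fin ρ.length, ρ.get a < ρ.get b ↔
      wv π ([p,q,r].getD ((a : ℕ)) 0) < wv π ([p,q,r].getD ((b : ℕ)) 0)) :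
    ContainsPat (permWord π) ρ := by
  have hl : (permWord π).length = n := permWord_length π
  refine ⟨fun a => ⟨[p,q,r].getD (a : ℕ) 0, ?_⟩, ?_, ?_⟩
  · have ha := a.isLt
    have h3 : (a : ℕ) < 3 := by omega
    clear ha
    rw [hl]
    interval_cases h : (a : ℕ) <;> simp <;> omega
  · intro a b hab
    have ha := a.isLt; have hb := b.isLt
    rw [Fin.lt_def] at hab
    simp only [Fin.mk_lt_mk]
    have hb3 : (b : ℕ) < 3 := by omega
    have ha3 : (a : ℕ) < 3 := by omega
    interval_cases h1 : (a : ℕ) <;> interval_cases h2 : (b : ℕ) <;> simp_all <;> omega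
  · intro a b
    rw [hiff a b]
    simp only [permWord_get]


lemma contains132_of {n : ℕ} (π : Equiv.Perm (Fin n)) (p q r : ℕ)
    (hpq : p < q) (hqr : q < r) (hr : r < n)
    (h1 : wv π p < wv π r) (h2 : wv π r < wv π q) :
    ContainsPat (permWord π) [1,3,2] := by
  apply toContains π [1,3,2] rfl p q r hpq hqr hr
  intro a b
  fin_cases a <;> fin_cases b <;> simp <;> omega

lemma contains321_of {n : ℕ} (π : Equiv.Perm (Fin n)) (p q r : ℕ)
    (hpq : p < q) (hqr : q < r) (hr : r < n)
    (h1 : wv π r < wv π q) (h2 : wv π q < wv π p) :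
    ContainsPat (permWord π) [3,2,1] := by
  apply toContains π [3,2,1] rfl p q r hpq hqr hr
  intro a b
  fin_cases a <;> fin_cases b <;> simp <;> omega

lemma of_contains132 {n : ℕ} (π : Equiv.Perm (Fin n))
    (h : ContainsPat (permWord π) [1,3,2]) :
    ∃ p q r, p < q ∧ q < r ∧ r < n ∧ wv π p < wv π r ∧ wv π r < wv π q := by
  obtain ⟨f, hm, hiff⟩ := h
  refine ⟨f ⟨0, by norm_num⟩, f ⟨1, by norm_num⟩, f ⟨2, by norm_num⟩, ?_, ?_, ?_, ?_, ?_⟩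
  · exact hm (by decide)
  · exact hm (by decide)
  · exact lt_of_lt_of_eq (f ⟨2, by norm_num⟩).isLt (permWord_length π)
  · have := (hiff ⟨0, by norm_num⟩ ⟨2, by norm_num⟩).mp (by decide)
    rwa [permWord_get, permWord_get] at this
  · have := (hiff ⟨2, by norm_num⟩ ⟨1, by norm_num⟩).mp (by decide)
    rwa [permWord_get, permWord_get] at this

lemma of_contains321 {n : ℕ} (π : Equiv.Perm (Fin n))
    (h : ContainsPat (permWord π) [3,2,1]) :
    ∃ p q r, p < q ∧ q < r ∧ r < n ∧ wv π r < wv π q ∧ wv π q < wv π p := by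
  obtain ⟨f, hm, hiff⟩ := h
  refine ⟨f ⟨0, by norm_num⟩, f ⟨1, by norm_num⟩, f ⟨2, by norm_num⟩, ?_, ?_, ?_, ?_, ?_⟩
  · exact hm (by decide)
  · exact hm (by decide)
  · exact lt_of_lt_of_eq (f ⟨2, by norm_num⟩).isLt (permWord_length π)
  · have := (hiff ⟨2, by norm_num⟩ ⟨1, by norm_num⟩).mp (by decide)
    rwa [permWord_get, permWord_get] at this
  · have := (hiff ⟨1, by norm_num⟩ ⟨0, by norm_num⟩).mp (by decide)
    rwa [permWord_get, permWord_get] at this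

def rotFun (n m i : ℕ) : Fin n → Fin n := fun x =>
  if h : (x : ℕ) < m ∧ m ≤ n then
    ⟨((x : ℕ) + i) % m, lt_of_lt_of_le (Nat.mod_lt _ (Nat.zero_lt_of_lt h.1)) h.2⟩
  else x

lemma rotFun_injective (n m i : ℕ) : Function.Injective (rotFun n m i) := by
  intro x y h
  unfold rotFun at h
  by_cases hx : (x : ℕ) < m ∧ m ≤ n <;> by_cases hy : (y : ℕ) < m ∧ m ≤ n
  · rw [dif_pos hx, dif_pos hy] at h
    have h2 : ((x : ℕ) + i) % m = ((y : ℕ) + i) % m := congrArg Fin.val h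
    have h3 : (x : ℕ) % m = (y : ℕ) % m := Nat.ModEq.add_right_cancel' i h2
    rw [Nat.mod_eq_of_lt hx.1, Nat.mod_eq_of_lt hy.1] at h3
    exact Fin.val_injective h3
  · rw [dif_pos hx, dif_neg hy] at h
    have h2 : ((x : ℕ) + i) % m = (y : ℕ) := congrArg Fin.val h
    have h4 : ((x : ℕ) + i) % m < m := Nat.mod_lt _ (Nat.zero_lt_of_lt hx.1)
    have : ¬ (y : ℕ) < m := fun hc => hy ⟨hc, hx.2⟩
    omega
  · rw [dif_neg hx, dif_pos hy] at h
    have h2 : (x : ℕ) = ((y : ℕ) + i) % m := congrArg Fin.val h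
    have h4 : ((y : ℕ) + i) % m < m := Nat.mod_lt _ (Nat.zero_lt_of_lt hy.1)
    have : ¬ (x : ℕ) < m := fun hc => hx ⟨hc, hy.2⟩
    omega
  · rwa [dif_neg hx, dif_neg hy] at h

noncomputable def rotPerm (n m i : ℕ) : Equiv.Perm (Fin n) :=
  Equiv.ofBijective _ (Finite.injective_iff_bijective.mp (rotFun_injective n m i))

lemma rotPerm_apply (n m i : ℕ) (x : Fin n) : rotPerm n m i x = rotFun n m i x := rfl

section rotVals
variable {n m i : ℕ} (h1 : 1 ≤ i) (h2 : i < m) (h3 : m ≤ n)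

include h1 h2 h3

lemma rot_val_lo {x : ℕ} (hx : x < m - i) (hxn : x < n) :
    ((rotPerm n m i ⟨x, hxn⟩ : Fin n) : ℕ) = x + i := by
  rw [rotPerm_apply]
  unfold rotFun
  rw [dif_pos ⟨by simp; omega, h3⟩]
  simp only
  exact Nat.mod_eq_of_lt (by omega)

lemma rot_val_mid {x : ℕ} (hx1 : m - i ≤ x) (hx2 : x < m) (hxn : x < n) :
    ((rotPerm n m i ⟨x, hxn⟩ : Fin n) : ℕ) = x - (m - i) := by
  rw [rotPerm_apply]
  unfold rotFun
  rw [dif_pos ⟨by simpa using hx2, h3⟩]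
  simp only
  have : x + i - m < m := by omega
  rw [Nat.mod_eq_sub_mod (by omega), Nat.mod_eq_of_lt this]
  omega

lemma rot_val_hi {x : ℕ} (hx : m ≤ x) (hxn : x < n) :
    ((rotPerm n m i ⟨x, hxn⟩ : Fin n) : ℕ) = x := by
  rw [rotPerm_apply]
  unfold rotFun
  rw [dif_neg (by simp; omega)]

lemma rot_wv_lo {x : ℕ} (hx : x < m - i) :
    wv (rotPerm n m i) x = x + i + 1 := by
  rw [wv_eq _ (by omega), rot_val_lo h1 h2 h3 hx]

lemma rot_wv_mid {x : ℕ} (hx1 : m - i ≤ x) (hx2 : x < m) :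
    wv (rotPerm n m i) x = x - (m - i) + 1 := by
  rw [wv_eq _ (by omega), rot_val_mid h1 h2 h3 hx1 hx2]

lemma rot_wv_hi {x : ℕ} (hx : m ≤ x) (hxn : x < n) :
    wv (rotPerm n m i) x = x + 1 := by
  rw [wv_eq _ hxn, rot_val_hi h1 h2 h3 hx hxn]

/-- any inversion of rotPerm straddles the descent -/
lemma rot_inversion {x y : ℕ} (hxy : x < y) (hyn : y < n)
    (hinv : wv (rotPerm n m i) y < wv (rotPerm n m i) x) :
    x < m - i ∧ m - i ≤ y ∧ y < m := by
  rcases Nat.lt_or_ge x (m - i) with hx | hx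
  · rcases Nat.lt_or_ge y (m - i) with hy | hy
    · rw [rot_wv_lo h1 h2 h3 hx, rot_wv_lo h1 h2 h3 hy] at hinv; omega
    rcases Nat.lt_or_ge y m with hy2 | hy2
    · exact ⟨hx, hy, hy2⟩
    · rw [rot_wv_lo h1 h2 h3 hx, rot_wv_hi h1 h2 h3 hy2 hyn] at hinv; omega
  · rcases Nat.lt_or_ge x m with hx2 | hx2
    · rcases Nat.lt_or_ge y m with hy2 | hy2
      · rw [rot_wv_mid h1 h2 h3 hx hx2, rot_wv_mid h1 h2 h3 (by omega) hy2] at hinv; omega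
      · rw [rot_wv_mid h1 h2 h3 hx hx2, rot_wv_hi h1 h2 h3 hy2 hyn] at hinv; omega
    · rw [rot_wv_hi h1 h2 h3 hx2 (by omega), rot_wv_hi h1 h2 h3 (by omega) hyn] at hinv
      omega

lemma rot_ascent_iff {x : ℕ} (hx : x + 1 < n) :
    wv (rotPerm n m i) x < wv (rotPerm n m i) (x + 1) ↔ x + 1 ≠ m - i := by
  constructor
  · intro hasc heq
    have hx1 : x < m - i := by omega
    rw [rot_wv_lo h1 h2 h3 hx1, rot_wv_mid h1 h2 h3 (by omega) (by omega)] at hasc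
    omega
  · intro hne
    rcases Nat.lt_or_ge (x + 1) (m - i) with hy | hy
    · rw [rot_wv_lo h1 h2 h3 (by omega), rot_wv_lo h1 h2 h3 hy]; omega
    rcases Nat.lt_or_ge (x + 1) m with hy2 | hy2
    · have hx1 : m - i ≤ x := by omega
      rw [rot_wv_mid h1 h2 h3 hx1 (by omega), rot_wv_mid h1 h2 h3 (by omega) hy2]
      omega
    rcases Nat.lt_or_ge x m with hx2 | hx2
    · have hx1 : m - i ≤ x := by omega
      rw [rot_wv_mid h1 h2 h3 hx1 hx2, rot_wv_hi h1 h2 h3 hy2 hx]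
      omega
    · rw [rot_wv_hi h1 h2 h3 hx2 (by omega), rot_wv_hi h1 h2 h3 hy2 hx]; omega

end rotVals

lemma rotPerm_zero (n : ℕ) : rotPerm n 0 0 = 1 := by
  apply Equiv.ext
  intro x
  rw [rotPerm_apply]
  unfold rotFun
  rw [dif_neg (by omega)]
  rfl

lemma id_wv {n : ℕ} {x : ℕ} (h : x < n) : wv (1 : Equiv.Perm (Fin n)) x = x + 1 := by
  rw [wv_eq _ h]; rfl

lemma id_avoids (n : ℕ) : AvoidsAll (permWord (1 : Equiv.Perm (Fin n))) [[1,3,2],[3,2,1]] := by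
  intro ρ hρ hc
  simp only [List.mem_cons, List.mem_singleton, List.not_mem_nil, or_false] at hρ
  rcases hρ with rfl | rfl
  · obtain ⟨p, q, r, hpq, hqr, hr, hv1, hv2⟩ := of_contains132 _ hc
    rw [id_wv hr, id_wv (show q < n by omega)] at hv2
    omega
  · obtain ⟨p, q, r, hpq, hqr, hr, hv1, hv2⟩ := of_contains321 _ hc
    rw [id_wv hr, id_wv (show q < n by omega)] at hv1
    omega

lemma rot_avoids {n m i : ℕ} (h1 : 1 ≤ i) (h2 : i < m) (h3 : m ≤ n) :
    AvoidsAll (permWord (rotPerm n m i)) [[1,3,2],[3,2,1]] := by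
  intro ρ hρ hc
  simp only [List.mem_cons, List.mem_singleton, List.not_mem_nil, or_false] at hρ
  rcases hρ with rfl | rfl
  · obtain ⟨p, q, r, hpq, hqr, hr, hv1, hv2⟩ := of_contains132 _ hc
    obtain ⟨hqA, hAr, hrm⟩ := rot_inversion h1 h2 h3 hqr hr hv2
    have hwr : wv (rotPerm n m i) r = r - (m - i) + 1 := rot_wv_mid h1 h2 h3 hAr hrm
    have hwp : wv (rotPerm n m i) p = p + i + 1 := rot_wv_lo h1 h2 h3 (by omega)
    omega
  · obtain ⟨p, q, r, hpq, hqr, hr, hv1, hv2⟩ := of_contains321 _ hc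
    obtain ⟨hqA, _, _⟩ := rot_inversion h1 h2 h3 hqr hr hv1
    obtain ⟨_, hAq, _⟩ := rot_inversion h1 h2 h3 hpq (by omega) hv2
    omega

lemma dascents_eq {n : ℕ} (π : Equiv.Perm (Fin n)) :
    dascents (permWord π) =
      ((range (n-2)).filter fun x => wv π x < wv π (x+1) ∧ wv π (x+1) < wv π (x+2)).card := by
  unfold dascents
  rw [permWord_length]
  rfl

lemma dascents_id {n : ℕ} (hn : 2 ≤ n) :
    dascents (permWord (1 : Equiv.Perm (Fin n))) = n - 2 := by
  rw [dascents_eq]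
  rw [Finset.filter_true_of_mem, Finset.card_range]
  intro x hx
  rw [Finset.mem_range] at hx
  rw [id_wv (by omega), id_wv (by omega), id_wv (by omega)]
  omega

lemma dascents_rot {n m i : ℕ} (h1 : 1 ≤ i) (h2 : i < m) (h3 : m ≤ n) (hn : 4 ≤ n) :
    dascents (permWord (rotPerm n m i)) =
      if m - i = 1 ∨ m - i = n - 1 then n - 3 else n - 4 := by
  rw [dascents_eq]
  have hcong : ((range (n-2)).filter fun x =>
      wv (rotPerm n m i) x < wv (rotPerm n m i) (x+1) ∧
      wv (rotPerm n m i) (x+1) < wv (rotPerm n m i) (x+2)).card =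
      ((range (n-2)).filter fun x => x + 1 ≠ m - i ∧ x + 2 ≠ m - i).card := by
    congr 1
    apply Finset.filter_congr
    intro x hx
    rw [Finset.mem_range] at hx
    rw [rot_ascent_iff h1 h2 h3 (by omega)]
    constructor
    · intro ⟨ha, hb⟩
      refine ⟨ha, ?_⟩
      have := (rot_ascent_iff h1 h2 h3 (x := x+1) (by omega)).mp hb
      omega
    · intro ⟨ha, hb⟩
      refine ⟨ha, ?_⟩
      rw [show x + 1 + 1 = x + 2 by omega]
      exact (rot_ascent_iff h1 h2 h3 (x := x+1) (by omega)).mpr (by omega)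
  rw [hcong]
  rcases eq_or_ne (m - i) 1 with hA | hA1
  · rw [if_pos (Or.inl hA)]
    have : ((range (n-2)).filter fun x => x + 1 ≠ m - i ∧ x + 2 ≠ m - i) =
        (range (n-2)).erase 0 := by
      rw [← Finset.filter_ne']
      apply Finset.filter_congr
      intro x _
      simp only [hA]
      omega
    rw [this, Finset.card_erase_of_mem (by simp; omega), Finset.card_range]
    omega
  rcases eq_or_ne (m - i) (n - 1) with hA | hA2
  · rw [if_pos (Or.inr hA)]
    have : ((range (n-2)).filter fun x => x + 1 ≠ m - i ∧ x + 2 ≠ m - i) =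
        (range (n-2)).erase (n-3) := by
      rw [← Finset.filter_ne']
      apply Finset.filter_congr
      intro x hx
      rw [Finset.mem_range] at hx
      simp only [hA]
      omega
    rw [this, Finset.card_erase_of_mem (by simp; omega), Finset.card_range]
    omega
  · rw [if_neg (by tauto)]
    have hA0 : 2 ≤ m - i := by omega
    have hAn : m - i ≤ n - 2 := by omega
    have : ((range (n-2)).filter fun x => x + 1 ≠ m - i ∧ x + 2 ≠ m - i) =
        ((range (n-2)).erase (m-i-1)).erase (m-i-2) := by
      rw [← Finset.filter_ne', ← Finset.filter_ne', Finset.filter_filter]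
      apply Finset.filter_congr
      intro x hx
      rw [Finset.mem_range] at hx
      constructor
      · intro ⟨ha, hb⟩; exact ⟨by omega, by omega⟩
      · intro ⟨ha, hb⟩; exact ⟨by omega, by omega⟩
    rw [this, Finset.card_erase_of_mem, Finset.card_erase_of_mem (by simp; omega),
      Finset.card_range]
    · omega
    · rw [Finset.mem_erase]
      constructor
      · omega
      · simp; omega

set_option maxHeartbeats 1000000 in
lemma avoids_classify {n : ℕ} (π : Equiv.Perm (Fin n))
    (hAv : AvoidsAll (permWord π) [[1,3,2],[3,2,1]]) :
    π = 1 ∨ ∃ m i, 1 ≤ i ∧ i < m ∧ m ≤ n ∧ π = rotPerm n m i := by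
  have H132 : ∀ p q r, p < q → q < r → r < n →
      wv π p < wv π r → wv π r < wv π q → False := by
    intro p q r h1 h2 h3 h4 h5
    exact hAv [1,3,2] (by simp) (contains132_of π p q r h1 h2 h3 h4 h5)
  have H321 : ∀ p q r, p < q → q < r → r < n →
      wv π r < wv π q → wv π q < wv π p → False := by
    intro p q r h1 h2 h3 h4 h5
    exact hAv [3,2,1] (by simp) (contains321_of π p q r h1 h2 h3 h4 h5)
  have step : ∀ t, t + 1 < n → ¬ (wv π (t+1) < wv π t) → wv π t < wv π (t+1) := by
    intro t h1 h2
    rcases lt_trichotomy (wv π t) (wv π (t+1)) with h | h | h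
    · exact h
    · exact absurd (wv_inj π (by omega) h1 h) (by omega)
    · exact absurd h h2
  have huniq0 : ∀ x y, x < y → x + 1 < n → y + 1 < n →
      wv π (x+1) < wv π x → wv π (y+1) < wv π y → False := by
    intro x y hxy hxn hyn hdx hdy
    rcases lt_trichotomy (wv π (x+1)) (wv π (y+1)) with h | h | h
    · rcases Nat.eq_or_lt_of_le (show x + 1 ≤ y by omega) with he | hlt2
      · subst he; omega
      · exact H132 (x+1) y (y+1) hlt2 (by omega) (by omega) h hdy
    · have := wv_inj π (by omega) (by omega) h; omega
    · exact H321 x (x+1) (y+1) (by omega) (by omega) (by omega) h hdx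
  have huniq : ∀ x y, x + 1 < n → y + 1 < n →
      wv π (x+1) < wv π x → wv π (y+1) < wv π y → x = y := by
    intro x y hxn hyn hdx hdy
    rcases lt_trichotomy x y with h | h | h
    · exact absurd (huniq0 x y h hxn hyn hdx hdy) (by simp)
    · exact h
    · exact absurd (huniq0 y x h hyn hxn hdy hdx) (by simp)
  by_cases hD : ∃ d, d + 1 < n ∧ wv π (d+1) < wv π d
  · right
    obtain ⟨d, hdn, hd1⟩ := hD
    have notdesc : ∀ t, t + 1 < n → t ≠ d → wv π t < wv π (t+1) := by
      intro t h1 h2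
      exact step t h1 (fun hc => h2 (huniq t d h1 hdn hc hd1))
    have run1 : ∀ x y, x < y → y ≤ d → wv π x < wv π y := by
      intro x y hxy hy
      exact chain_lt (wv π) 0 d
        (fun t ht htb => notdesc t (by omega) (by omega)) x y (by omega) hxy hy
    have run2 : ∀ x y, d + 1 ≤ x → x < y → y ≤ n - 1 → wv π x < wv π y := by
      intro x y hx hxy hy
      exact chain_lt (wv π) (d+1) (n-1)
        (fun t ht htb => notdesc t (by omega) (by omega)) x y hx hxy hy
    have consec : ∀ x, x < d → wv π (x+1) = wv π x + 1 := by
      intro x hx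
      by_contra hne
      have hasc : wv π x < wv π (x+1) := run1 x (x+1) (by omega) (by omega)
      have hle : wv π (x+1) ≤ n := wv_le π (by omega)
      obtain ⟨r, hrn, hrc⟩ := wv_surj π (c := wv π x + 1) (by omega) (by omega)
      have hrd : d < r := by
        by_contra hrd
        push_neg at hrd
        rcases lt_trichotomy r x with h | h | h
        · have := run1 r x h (by omega); omega
        · subst h; omega
        · rcases Nat.eq_or_lt_of_le (show x + 1 ≤ r by omega) with he | hlt
          · rw [← he] at hrc; omega
          · have := run1 (x+1) r hlt hrd; omega
      exact H132 x (x+1) r (by omega) (by omega) hrn (by omega) (by omega)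
    have vals1 : ∀ x, x ≤ d → wv π x = wv π 0 + x := by
      intro x
      induction x with
      | zero => intro _; omega
      | succ t ih =>
        intro h
        rw [consec t (by omega), ih (by omega)]
        omega
    have hw0 : 1 ≤ wv π 0 := wv_pos π (by omega)
    set i := wv π 0 - 1 with hi_def
    set m := i + d + 1 with hm_def
    have hwvd : wv π d = m := by rw [vals1 d le_rfl]; omega
    have hm_le : m ≤ n := by have := wv_le π (show d < n by omega); omega
    have hwd1 : wv π (d+1) ≤ i := by
      by_contra h
      push_neg at h
      have hub : wv π (d+1) < m := by omega
      set t := wv π (d+1) - (i + 1) with ht_def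
      have ht : t ≤ d := by omega
      have := vals1 t ht
      have heq : wv π t = wv π (d+1) := by omega
      have := wv_inj π (by omega) (by omega) heq
      omega
    have hi1 : 1 ≤ i := by have := wv_pos π (show d + 1 < n by omega); omega
    have hA : m - i = d + 1 := by omega
    refine ⟨m, i, hi1, by omega, hm_le, ?_⟩
    set σ := rotPerm n m i with hσ
    have hfront : ∀ x, x ≤ d → wv π x = wv σ x := by
      intro x hx
      rw [vals1 x hx, rot_wv_lo hi1 (by omega) hm_le (show x < m - i by omega)]
      omega
    have hfrontFin : ∀ x : Fin n, (x : ℕ) ≤ d → π x = σ x := by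
      intro x hx
      have h := hfront x.1 hx
      rw [wv_eq _ x.isLt, wv_eq _ x.isLt] at h
      simp only [Fin.eta] at h
      exact Fin.val_injective (by omega)
    have hσrun2 : ∀ x y, d + 1 ≤ x → x < y → y ≤ n - 1 → wv σ x < wv σ y := by
      intro x y hx hxy hy
      refine chain_lt (wv σ) (d+1) (n-1) (fun t ht htb => ?_) x y hx hxy hy
      exact (rot_ascent_iff hi1 (by omega) hm_le (by omega)).mpr (by omega)
    set k := n - (d + 1) with hk_def
    set s : Finset (Fin n) := Finset.univ.filter (fun y => ∀ x : Fin n, (x:ℕ) ≤ d → π x ≠ y)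
      with hs_def
    have hfilter_card : (Finset.univ.filter (fun x : Fin n => (x:ℕ) ≤ d)).card = d + 1 := by
      rw [← Finset.card_range (d+1)]
      apply Finset.card_bij (fun (x : Fin n) _ => (x : ℕ))
      · intro a ha
        rw [Finset.mem_filter] at ha
        rw [Finset.mem_range]
        omega
      · intro a ha b hb hab
        exact Fin.val_injective hab
      · intro b hb
        rw [Finset.mem_range] at hb
        exact ⟨⟨b, by omega⟩, by simp; omega, rfl⟩
    have hs_card : s.card = k := by
      have : s = Finset.univ \ Finset.image π (Finset.univ.filter (fun x : Fin n => (x:ℕ) ≤ d)) := by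
        ext y
        simp only [hs_def, Finset.mem_filter, Finset.mem_univ, true_and, Finset.mem_sdiff,
          Finset.mem_image, not_exists]
        tauto
      rw [this, Finset.card_sdiff_of_subset (Finset.subset_univ _),
        Finset.card_image_of_injective _ π.injective, hfilter_card, Finset.card_univ,
        Fintype.card_fin]
    set f : Fin k → Fin n := fun t => π ⟨d + 1 + t.1, by omega⟩ with hf_def
    set g : Fin k → Fin n := fun t => σ ⟨d + 1 + t.1, by omega⟩ with hg_def
    have hfs : ∀ t, f t ∈ s := by
      intro t
      simp only [hs_def, Finset.mem_filter, Finset.mem_univ, true_and, hf_def]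
      intro x hx hc
      have := π.injective hc
      have := congrArg Fin.val this
      simp at this
      omega
    have hgs : ∀ t, g t ∈ s := by
      intro t
      simp only [hs_def, Finset.mem_filter, Finset.mem_univ, true_and, hg_def]
      intro x hx hc
      rw [hfrontFin x hx] at hc
      have := σ.injective hc
      have := congrArg Fin.val this
      simp at this
      omega
    have hmono_of_wv : ∀ (τ : Equiv.Perm (Fin n)),
        (∀ x y, d + 1 ≤ x → x < y → y ≤ n - 1 → wv τ x < wv τ y) →
        StrictMono (fun t : Fin k => τ ⟨d + 1 + t.1, by omega⟩) := by
      intro τ hτ a b hab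
      have hb := b.isLt
      have hab' : (a : ℕ) < (b : ℕ) := hab
      exact (wv_lt_iff τ (show d + 1 + a.1 < n by omega) (show d + 1 + b.1 < n by omega)).mp
        (hτ (d + 1 + a.1) (d + 1 + b.1) (by omega) (by omega) (by omega))
    have hfmono : StrictMono f := hmono_of_wv π run2
    have hgmono : StrictMono g := hmono_of_wv σ hσrun2
    have hfg : f = g := by
      rw [Finset.orderEmbOfFin_unique hs_card hfs hfmono,
        Finset.orderEmbOfFin_unique hs_card hgs hgmono]
    apply Equiv.ext
    intro x
    rcases le_or_gt (x : ℕ) d with hx | hx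
    · exact hfrontFin x hx
    · have hxk : (x : ℕ) - (d + 1) < k := by have := x.isLt; omega
      have := congrFun hfg ⟨(x : ℕ) - (d + 1), hxk⟩
      simp only [hf_def, hg_def] at this
      have hidx : (⟨d + 1 + ((x : ℕ) - (d + 1)), by omega⟩ : Fin n) = x := by
        apply Fin.val_injective
        simp
        omega
      rwa [hidx] at this
  · left
    push_neg at hD
    have mono : ∀ x y, x < y → y < n → wv π x < wv π y := by
      intro x y hxy hy
      exact chain_lt (wv π) 0 (n-1)
        (fun t ht htb => step t (by omega)
          (fun hc => absurd hc (Nat.not_lt.mpr (hD t (by omega))))) x y (by omega) hxy (by omega)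
    have hsm : StrictMono (⇑π) := by
      intro a b hab
      have hab' : (a : ℕ) < (b : ℕ) := hab
      have h := mono a.1 b.1 hab' b.isLt
      rw [wv_eq _ a.isLt, wv_eq _ b.isLt] at h
      simp only [Fin.eta] at h
      simp only [Fin.lt_def]
      omega
    have hrange : Set.range (⇑π) = Set.range (id : Fin n → Fin n) := by
      rw [Set.range_id, π.surjective.range_eq]
    haveI : WellFoundedLT (Fin n) := inferInstance
    have := (hsm.range_inj strictMono_id).1 hrange
    exact Equiv.ext (fun x => congrFun this x)

noncomputable def Fp (n : ℕ) : ℕ × ℕ → Equiv.Perm (Fin n) := fun p => rotPerm n p.1 p.2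

noncomputable def param (n : ℕ) : Finset (ℕ × ℕ) :=
  ((range (n+1)) ×ˢ (range (n+1))).filter fun p =>
    p = (0,0) ∨ (1 ≤ p.2 ∧ p.2 < p.1 ∧ p.1 ≤ n)

lemma mem_param {n : ℕ} {p : ℕ × ℕ} :
    p ∈ param n ↔ p = (0,0) ∨ (1 ≤ p.2 ∧ p.2 < p.1 ∧ p.1 ≤ n) := by
  unfold param
  rw [Finset.mem_filter, Finset.mem_product, Finset.mem_range, Finset.mem_range]
  constructor
  · exact fun h => h.2
  · intro h
    refine ⟨?_, h⟩
    rcases h with rfl | ⟨h1, h2, h3⟩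
    · constructor <;> omega
    · constructor <;> omega

lemma rot_val_zero {n m i : ℕ} (h1 : 1 ≤ i) (h2 : i < m) (h3 : m ≤ n) :
    ((rotPerm n m i ⟨0, by omega⟩ : Fin n) : ℕ) = i := by
  rw [rot_val_lo h1 h2 h3 (by omega)]
  omega

lemma rot_val_A {n m i : ℕ} (h1 : 1 ≤ i) (h2 : i < m) (h3 : m ≤ n) :
    ((rotPerm n m i ⟨m - i, by omega⟩ : Fin n) : ℕ) = 0 := by
  rw [rot_val_mid h1 h2 h3 le_rfl (by omega)]
  omega

lemma Fp_injOn {n : ℕ} (hn : 1 ≤ n) : Set.InjOn (Fp n) (param n) := by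
  intro p hp q hq h
  rw [Finset.mem_coe, mem_param] at hp hq
  have hval : ∀ (x : ℕ) (hx : x < n),
      ((Fp n p ⟨x, hx⟩ : Fin n) : ℕ) = ((Fp n q ⟨x, hx⟩ : Fin n) : ℕ) := by
    intro x hx
    rw [h]
  rcases hp with rfl | ⟨hp1, hp2, hp3⟩ <;> rcases hq with rfl | ⟨hq1, hq2, hq3⟩
  · rfl
  · exfalso
    have := hval (q.1 - q.2) (by omega)
    unfold Fp at this
    rw [rotPerm_zero] at this
    rw [rot_val_A hq1 hq2 hq3] at this
    simp at this
    omega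
  · exfalso
    have := hval (p.1 - p.2) (by omega)
    unfold Fp at this
    rw [rotPerm_zero] at this
    rw [rot_val_A hp1 hp2 hp3] at this
    simp at this
    omega
  · have hi : p.2 = q.2 := by
      have := hval 0 (by omega)
      unfold Fp at this
      rw [rot_val_zero hp1 hp2 hp3, rot_val_zero hq1 hq2 hq3] at this
      exact this
    have hm : p.1 = q.1 := by
      by_contra hne
      rcases Nat.lt_or_ge (p.1 - p.2) (q.1 - q.2) with hlt | hge
      · have := hval (p.1 - p.2) (by omega)
        unfold Fp at this
        rw [rot_val_A hp1 hp2 hp3] at this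
        rw [rot_val_lo hq1 hq2 hq3 hlt] at this
        omega
      · have hne2 : q.1 - q.2 < p.1 - p.2 := by omega
        have := hval (q.1 - q.2) (by omega)
        unfold Fp at this
        rw [rot_val_A hq1 hq2 hq3] at this
        rcases Nat.lt_or_ge (q.1 - q.2) (p.1 - p.2) with _ | _
        · rw [rot_val_lo hp1 hp2 hp3 (by omega)] at this
          omega
        · omega
    exact Prod.ext hm hi

noncomputable def dvalue (n : ℕ) (p : ℕ × ℕ) : ℕ :=
  if p = (0,0) then n - 2 else if p.1 - p.2 = 1 ∨ p.1 - p.2 = n - 1 then n - 3 else n - 4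

lemma dvalue_cases (n : ℕ) (p : ℕ × ℕ) :
    dvalue n p = n - 2 ∨ dvalue n p = n - 3 ∨ dvalue n p = n - 4 := by
  unfold dvalue
  split_ifs <;> tauto

lemma dascents_Fp {n : ℕ} (hn : 4 ≤ n) {p : ℕ × ℕ} (hp : p ∈ param n) :
    dascents (permWord (Fp n p)) = dvalue n p := by
  rw [mem_param] at hp
  rcases hp with rfl | ⟨h1, h2, h3⟩
  · unfold Fp dvalue
    rw [rotPerm_zero, if_pos rfl]
    exact dascents_id (by omega)
  · unfold Fp dvalue
    rw [if_neg (by rintro rfl; simp at h1), dascents_rot h1 h2 h3 hn]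

lemma avoid_filter_eq {n : ℕ} (hn : 4 ≤ n) (k : ℕ) :
    (Finset.univ.filter fun π : Equiv.Perm (Fin n) =>
      AvoidsAll (permWord π) [[1,3,2],[3,2,1]] ∧ dascents (permWord π) = k)
    = ((param n).filter fun p => dvalue n p = k).image (Fp n) := by
  ext σ
  rw [Finset.mem_filter, Finset.mem_image]
  constructor
  · intro ⟨_, hav, hd⟩
    rcases avoids_classify σ hav with rfl | ⟨m, i, h1, h2, h3, rfl⟩
    · refine ⟨(0,0), ?_, ?_⟩
      · rw [Finset.mem_filter]
        refine ⟨mem_param.mpr (Or.inl rfl), ?_⟩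
        rw [← hd]
        exact (dascents_Fp hn (mem_param.mpr (Or.inl rfl))).symm.trans
          (by unfold Fp; rw [rotPerm_zero])
      · unfold Fp; rw [rotPerm_zero]
    · refine ⟨(m, i), ?_, rfl⟩
      rw [Finset.mem_filter]
      have hmem : (m, i) ∈ param n := mem_param.mpr (Or.inr ⟨h1, h2, h3⟩)
      exact ⟨hmem, by rw [← dascents_Fp hn hmem]; exact hd⟩
  · rintro ⟨p, hp, rfl⟩
    rw [Finset.mem_filter] at hp
    obtain ⟨hp1, hp2⟩ := hp
    refine ⟨Finset.mem_univ _, ?_, by rw [dascents_Fp hn hp1]; exact hp2⟩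
    rw [mem_param] at hp1
    rcases hp1 with rfl | ⟨h1, h2, h3⟩
    · unfold Fp; rw [rotPerm_zero]; exact id_avoids n
    · exact rot_avoids h1 h2 h3

lemma acount_eq {n : ℕ} (hn : 4 ≤ n) (k : ℕ) :
    acount n k dascents [[1,3,2],[3,2,1]] = ((param n).filter fun p => dvalue n p = k).card := by
  unfold acount
  rw [avoid_filter_eq hn k, Finset.card_image_of_injOn]
  exact (Fp_injOn (by omega)).mono (by intro x hx; rw [Finset.mem_coe, Finset.mem_filter] at hx; exact hx.1)

lemma card_d2 {n : ℕ} (hn : 4 ≤ n) :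
    ((param n).filter fun p => dvalue n p = n - 2).card = 1 := by
  have : ((param n).filter fun p => dvalue n p = n - 2) = {(0,0)} := by
    ext p
    rw [Finset.mem_filter, Finset.mem_singleton]
    constructor
    · intro ⟨hp, hd⟩
      by_contra hne
      unfold dvalue at hd
      rw [if_neg hne] at hd
      split_ifs at hd <;> omega
    · rintro rfl
      exact ⟨mem_param.mpr (Or.inl rfl), by unfold dvalue; rw [if_pos rfl]⟩
  rw [this, Finset.card_singleton]

lemma card_d3 {n : ℕ} (hn : 4 ≤ n) :
    ((param n).filter fun p => dvalue n p = n - 3).card = n := by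
  have hset : ((param n).filter fun p => dvalue n p = n - 3)
      = insert (n,1) ((Finset.Icc 1 (n-1)).image fun i => (i+1, i)) := by
    ext ⟨a, b⟩
    rw [Finset.mem_filter, Finset.mem_insert, Finset.mem_image]
    constructor
    · intro ⟨hp, hd⟩
      rw [mem_param] at hp
      rcases hp with he | ⟨h1, h2, h3⟩
      · rw [Prod.mk.injEq] at he
        unfold dvalue at hd
        rw [if_pos (by rw [Prod.mk.injEq]; exact ⟨he.1, he.2⟩)] at hd
        omega
      · simp only at h1 h2 h3
        unfold dvalue at hd
        rw [if_neg (by rw [Prod.mk.injEq]; rintro ⟨rfl, rfl⟩; omega)] at hd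
        simp only at hd
        split_ifs at hd with hcond
        · rcases hcond with hA | hA
          · right
            refine ⟨b, by rw [Finset.mem_Icc]; omega, ?_⟩
            rw [Prod.mk.injEq]
            omega
          · left
            rw [Prod.mk.injEq]
            omega
        · omega
    · intro h
      rcases h with he | ⟨i, hi, he⟩
      · rw [Prod.mk.injEq] at he
        obtain ⟨rfl, rfl⟩ := he
        refine ⟨mem_param.mpr (Or.inr ⟨le_rfl, by omega, le_rfl⟩), ?_⟩
        unfold dvalue
        rw [if_neg (by rw [Prod.mk.injEq]; intro ⟨ha, hb⟩; omega),
          if_pos (by simp)]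
      · rw [Finset.mem_Icc] at hi
        rw [Prod.mk.injEq] at he
        obtain ⟨rfl, rfl⟩ := he
        refine ⟨mem_param.mpr (Or.inr ⟨hi.1, by omega, by omega⟩), ?_⟩
        unfold dvalue
        rw [if_neg (by rw [Prod.mk.injEq]; intro ⟨ha, hb⟩; omega),
          if_pos (Or.inl (by simp))]
  rw [hset, Finset.card_insert_of_notMem, Finset.card_image_of_injective _
    (fun a b hab => by simpa using (Prod.ext_iff.mp hab).2), Nat.card_Icc]
  · omega
  · rw [Finset.mem_image]
    rintro ⟨i, hi, he⟩
    rw [Finset.mem_Icc] at hi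
    rw [Prod.mk.injEq] at he
    omega

lemma sum_pred (n : ℕ) : ∑ m ∈ Finset.Icc 1 n, (m - 1) = n.choose 2 := by
  induction n with
  | zero => simp
  | succ t ih =>
    rw [Finset.sum_Icc_succ_top (by omega), ih]
    have h : (t+1).choose 2 = t.choose 1 + t.choose 2 := Nat.choose_succ_succ t 1
    rw [Nat.choose_one_right] at h
    omega

lemma card_param {n : ℕ} (hn : 1 ≤ n) : (param n).card = n.choose 2 + 1 := by
  have hsplit : param n = insert (0,0)
      (((range (n+1)) ×ˢ (range (n+1))).filter fun p => 1 ≤ p.2 ∧ p.2 < p.1 ∧ p.1 ≤ n) := by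
    ext ⟨a, b⟩
    rw [mem_param, Finset.mem_insert, Finset.mem_filter, Finset.mem_product,
      Finset.mem_range, Finset.mem_range]
    simp only [Prod.mk.injEq]
    constructor
    · intro h
      rcases h with ⟨rfl, rfl⟩ | ⟨h1, h2, h3⟩
      · left; exact ⟨rfl, rfl⟩
      · right; exact ⟨⟨by omega, by omega⟩, h1, h2, h3⟩
    · intro h
      rcases h with ⟨rfl, rfl⟩ | ⟨_, h1, h2, h3⟩
      · left; exact ⟨rfl, rfl⟩
      · right; exact ⟨h1, h2, h3⟩
  have hT : (((range (n+1)) ×ˢ (range (n+1))).filter fun p : ℕ × ℕ =>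
      1 ≤ p.2 ∧ p.2 < p.1 ∧ p.1 ≤ n)
      = (Finset.Icc 1 n).biUnion fun m => (Finset.Icc 1 (m-1)).image fun i => (m, i) := by
    ext ⟨a, b⟩
    rw [Finset.mem_filter, Finset.mem_product, Finset.mem_biUnion]
    simp only [Finset.mem_range, Finset.mem_Icc, Finset.mem_image, Prod.mk.injEq]
    constructor
    · intro ⟨⟨_, _⟩, h1, h2, h3⟩
      exact ⟨a, ⟨by omega, h3⟩, b, ⟨h1, by omega⟩, rfl, rfl⟩
    · rintro ⟨m, hm, i, hi, rfl, rfl⟩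
      refine ⟨⟨by omega, by omega⟩, by omega, by omega, by omega⟩
  have hdisj : ∀ x ∈ Finset.Icc 1 n, ∀ y ∈ Finset.Icc 1 n, x ≠ y →
      Disjoint ((Finset.Icc 1 (x-1)).image fun i => (x, i))
        ((Finset.Icc 1 (y-1)).image fun i => (y, i)) := by
    intro x _ y _ hxy
    rw [Finset.disjoint_left]
    intro p hp hq
    rw [Finset.mem_image] at hp hq
    obtain ⟨i, _, rfl⟩ := hp
    obtain ⟨j, _, he⟩ := hq
    rw [Prod.mk.injEq] at he
    exact hxy he.1.symm
  rw [hsplit, Finset.card_insert_of_notMem (by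
      rw [Finset.mem_filter]
      rintro ⟨_, h, _⟩
      simp at h), hT, Finset.card_biUnion hdisj]
  congr 1
  calc ∑ m ∈ Finset.Icc 1 n, ((Finset.Icc 1 (m-1)).image fun i => (m, i)).card
      = ∑ m ∈ Finset.Icc 1 n, (m - 1) := by
        apply Finset.sum_congr rfl
        intro m _
        rw [Finset.card_image_of_injective _
          (fun a b hab => by simpa using (Prod.ext_iff.mp hab).2), Nat.card_Icc]
        omega
    _ = n.choose 2 := sum_pred n

lemma card_d4 {n : ℕ} (hn : 4 ≤ n) :
    ((param n).filter fun p => dvalue n p = n - 4).card = n.choose 2 - n := by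
  have htot := card_param (show 1 ≤ n by omega)
  have h1 := Finset.card_filter_add_card_filter_not
    (s := param n) (p := fun p => dvalue n p = n - 2)
  have h2 := Finset.card_filter_add_card_filter_not
    (s := (param n).filter fun p => ¬ dvalue n p = n - 2) (p := fun p => dvalue n p = n - 3)
  have e3 : (((param n).filter fun p => ¬ dvalue n p = n - 2).filter
      fun p => dvalue n p = n - 3) = (param n).filter fun p => dvalue n p = n - 3 := by
    rw [Finset.filter_filter]
    apply Finset.filter_congr
    intro p _
    constructor
    · exact fun h => h.2
    · intro h
      exact ⟨by omega, h⟩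
  have e4 : (((param n).filter fun p => ¬ dvalue n p = n - 2).filter
      fun p => ¬ dvalue n p = n - 3) = (param n).filter fun p => dvalue n p = n - 4 := by
    rw [Finset.filter_filter]
    apply Finset.filter_congr
    intro p _
    constructor
    · intro ⟨ha, hb⟩
      rcases dvalue_cases n p with h | h | h
      · exact absurd h ha
      · exact absurd h hb
      · exact h
    · intro h
      exact ⟨by omega, by omega⟩
  rw [e3, e4] at h2
  have hc2 := card_d2 hn
  have hc3 := card_d3 hn
  omega

lemma card_dother {n : ℕ} (hn : 4 ≤ n) (k : ℕ) (h2 : k ≠ n - 2) (h3 : k ≠ n - 3)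
    (h4 : k ≠ n - 4) : ((param n).filter fun p => dvalue n p = k).card = 0 := by
  rw [Finset.card_eq_zero, Finset.filter_eq_empty_iff]
  intro p _
  rcases dvalue_cases n p with h | h | h <;> omega

end Aux18


theorem stmt18 (n : ℕ) (hn : 4 ≤ n) :
    acount n (n - 2) dascents [[1,3,2],[3,2,1]] = 1 ∧
    acount n (n - 3) dascents [[1,3,2],[3,2,1]] = n ∧
    acount n (n - 4) dascents [[1,3,2],[3,2,1]] = Nat.choose n 2 - n ∧
    ∀ k, k ≠ n - 2 → k ≠ n - 3 → k ≠ n - 4 →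
      acount n k dascents [[1,3,2],[3,2,1]] = 0 := by
  refine ⟨?_, ?_, ?_, ?_⟩
  · rw [Aux18.acount_eq hn, Aux18.card_d2 hn]
  · rw [Aux18.acount_eq hn, Aux18.card_d3 hn]
  · rw [Aux18.acount_eq hn, Aux18.card_d4 hn]
  · intro k hk2 hk3 hk4
    rw [Aux18.acount_eq hn]
    exact Aux18.card_dother hn k hk2 hk3 hk4
end
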